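/- arXiv:q-alg/9703041 — 10 statements merged into one kernel-verified Lean document; each statement's English description precedes it below -/
import Mathlib

section
/- Let n ≥ 1, let q ∈ ℂ with q ≠ −1, and let U = (u_{ij}) and V = (v^{kl}) be nonzero n×n complex matrices. Let S be the TL-type operator attached to q, U, V. Then S satisfies the Hecke quadratic relation (I + S)(q·I − S) = 0 (where I is the identity n²×n² matrix) if and only if tr(U·Vᵀ) = 1, i.e. Σ_{i,j} u_{ij} v^{ij} = 1. -/
open Matrix

/-- The TL-type (rank-2 even Hecke symmetry) operator attached to `q`, `U`, `V`:
the `n² × n²` matrix with entry `S_{ij}^{kl} = q·δ_i^k·δ_j^l − (1+q)·u_{ij}·v^{kl}`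
at row `(i,j)` and column `(k,l)`. -/
def TLop (n : ℕ) (q : ℂ) (U V : Matrix (Fin n) (Fin n) ℂ) :
    Matrix (Fin n × Fin n) (Fin n × Fin n) ℂ :=
  fun p r =>
    q * (if p.1 = r.1 then 1 else 0) * (if p.2 = r.2 then 1 else 0)
      - (1 + q) * U p.1 p.2 * V r.1 r.2

/-!
Flattening `U` and `V` to vectors `u`, `v` indexed by pairs writes `S = q − (1+q) P` with
`P = u vᵀ` of rank one, so `1 + S = (1+q)(1 − P)` and `q − S = (1+q) P`. Since
`P² = (v ⬝ u) P` and `v ⬝ u = tr(U Vᵀ)`, the Hecke product equals `(1+q)² (1 − tr(U Vᵀ)) P`,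
and `P ≠ 0` when `U, V ≠ 0`.
-/

theorem one_add_mul_sub_eq_smul_sub_mul {R A : Type*} [CommRing R] [Ring A] [Algebra R A]
    (q : R) (p : A) :
    (1 + (q • 1 - (1 + q) • p)) * (q • 1 - (q • 1 - (1 + q) • p)) =
      (1 + q) ^ 2 • (p - p * p) := by
  have one_add : 1 + (q • 1 - (1 + q) • p) = (1 + q) • (1 - p) := by module
  rw [one_add, sub_sub_cancel, smul_mul_smul_comm, sq, sub_mul, one_mul]

theorem vecMulVec_mul_self {ι R : Type*} [Fintype ι] [CommSemiring R] (u v : ι → R) :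
    vecMulVec u v * vecMulVec u v = (v ⬝ᵥ u) • vecMulVec u v := by
  rw [vecMulVec_mul_vecMulVec, vecMulVec_smul]

theorem trace_mul_transpose_eq_dotProduct {m n R : Type*} [Fintype m] [Fintype n]
    [AddCommMonoid R] [Mul R] (A B : Matrix m n R) :
    (A * Bᵀ).trace = Function.uncurry A ⬝ᵥ Function.uncurry B := by
  simp [trace, mul_apply, dotProduct, Fintype.sum_prod_type, Function.uncurry]

theorem TLop_eq_smul_one_sub_smul_vecMulVec (n : ℕ) (q : ℂ) (U V : Matrix (Fin n) (Fin n) ℂ) :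
    TLop n q U V = q • 1 - (1 + q) • vecMulVec (Function.uncurry U) (Function.uncurry V) := by
  ext ⟨i, j⟩ ⟨k, l⟩
  simp only [TLop, Matrix.sub_apply, Matrix.smul_apply, one_apply, Prod.mk.injEq, vecMulVec_apply,
    Function.uncurry, smul_eq_mul]
  split_ifs <;> simp_all <;> ring

theorem one_add_TLop_mul_smul_one_sub_TLop (n : ℕ) (q : ℂ) (U V : Matrix (Fin n) (Fin n) ℂ) :
    (1 + TLop n q U V) * (q • 1 - TLop n q U V) =
      ((1 + q) ^ 2 * (1 - (U * Vᵀ).trace)) •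
        vecMulVec (Function.uncurry U) (Function.uncurry V) := by
  rw [TLop_eq_smul_one_sub_smul_vecMulVec, one_add_mul_sub_eq_smul_sub_mul, vecMulVec_mul_self,
    trace_mul_transpose_eq_dotProduct, dotProduct_comm, mul_smul, sub_smul, one_smul]

theorem tl_hecke_iff_trace_one_general (n : ℕ) (q : ℂ) (hq : q ≠ -1)
    (U V : Matrix (Fin n) (Fin n) ℂ) (hU : U ≠ 0) (hV : V ≠ 0) :
    (1 + TLop n q U V) *
        (q • (1 : Matrix (Fin n × Fin n) (Fin n × Fin n) ℂ) - TLop n q U V) = 0 ↔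
      (U * Vᵀ).trace = 1 := by
  have hq' : (1 + q) ^ 2 ≠ 0 := pow_ne_zero 2 fun h => hq (eq_neg_of_add_eq_zero_right h)
  have hP : vecMulVec (Function.uncurry U) (Function.uncurry V) ≠ 0 := by
    rw [Ne, vecMulVec_eq_zero, not_or]
    exact ⟨Function.uncurry_injective.ne hU, Function.uncurry_injective.ne hV⟩
  rw [one_add_TLop_mul_smul_one_sub_TLop, smul_eq_zero, or_iff_left hP, mul_eq_zero,
    or_iff_right hq', sub_eq_zero, eq_comm]

/-- for `n ≥ 1`, `q ≠ −1` and nonzero `U`, `V`, the TL-type operator `S`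
satisfies the Hecke quadratic relation `(I + S)(q·I − S) = 0` iff `tr(U·Vᵀ) = 1`. -/
theorem tl_hecke_iff_trace_one (n : ℕ) (hn : 1 ≤ n) (q : ℂ) (hq : q ≠ -1)
    (U V : Matrix (Fin n) (Fin n) ℂ) (hU : U ≠ 0) (hV : V ≠ 0) :
    (1 + TLop n q U V) *
        (q • (1 : Matrix (Fin n × Fin n) (Fin n × Fin n) ℂ) - TLop n q U V) = 0 ↔
      (U * Vᵀ).trace = 1 :=
  tl_hecke_iff_trace_one_general n q hq U V hU hV
end

section
/- Let n ≥ 1, let q ∈ ℂ with q ≠ 0 and q ≠ −1, and let U, V be n×n complex matrices. Set Z := (1+q)·V·Uᵀ. Then the following are equivalent: (a) tr(U·Vᵀ) = 1 and U·V·Uᵀ·Vᵀ = q(1+q)^{−2}·I; (b) V and Z are invertible, q·(Zᵀ)^{−1} = V^{−1}·Z·V, and tr Z = 1+q. -/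
open Matrix


/-- Cyclic shift for products equal to a nonzero scalar matrix. -/
lemma cyc_smul_one {n : ℕ} (c : ℂ) (hc : c ≠ 0) (A B : Matrix (Fin n) (Fin n) ℂ)
    (h : A * B = c • 1) : B * A = c • 1 := by
  have h1 : A * (c⁻¹ • B) = 1 := by
    rw [Matrix.mul_smul, h, smul_smul, inv_mul_cancel₀ hc, one_smul]
  have h2 := mul_eq_one_comm.mp h1
  rw [Matrix.smul_mul] at h2
  calc B * A = c • (c⁻¹ • (B * A)) := by
        rw [smul_smul, mul_inv_cancel₀ hc, one_smul]
    _ = c • 1 := by rw [h2]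

/-- for `n ≥ 1`, `q ≠ 0`, `q ≠ −1`, and `Z := (1+q)·V·Uᵀ`, system (5)
(`tr(U·Vᵀ) = 1` and `U·V·Uᵀ·Vᵀ = q(1+q)⁻²·I`) holds iff `V` and `Z` are invertible,
`q·(Zᵀ)⁻¹ = V⁻¹·Z·V`, and `tr Z = 1 + q` (system (6)). -/
theorem system5_iff_system6 (n : ℕ) (hn : 1 ≤ n) (q : ℂ) (hq0 : q ≠ 0) (hq1 : q ≠ -1)
    (U V Z : Matrix (Fin n) (Fin n) ℂ) (hZ : Z = (1 + q) • (V * Uᵀ)) :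
    ((U * Vᵀ).trace = 1 ∧
        U * V * Uᵀ * Vᵀ = (q * ((1 + q) ^ 2)⁻¹) • (1 : Matrix (Fin n) (Fin n) ℂ)) ↔
      (IsUnit V ∧ IsUnit Z ∧ q • (Zᵀ)⁻¹ = V⁻¹ * Z * V ∧ Z.trace = 1 + q) := by
  have h1q : (1 : ℂ) + q ≠ 0 := by
    intro h; exact hq1 (by linear_combination h)
  set c : ℂ := q * ((1 + q) ^ 2)⁻¹ with hcdef
  have hc : c ≠ 0 := by
    apply mul_ne_zero hq0
    exact inv_ne_zero (pow_ne_zero _ h1q)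
  have hZt : Zᵀ = (1 + q) • (U * Vᵀ) := by
    rw [hZ]; simp [Matrix.transpose_smul, Matrix.transpose_mul]
  have htrZ : Z.trace = (1 + q) * (U * Vᵀ).trace := by
    rw [hZ, Matrix.trace_smul]
    have : (V * Uᵀ).trace = (U * Vᵀ).trace := by
      rw [← Matrix.trace_transpose (U * Vᵀ), Matrix.transpose_mul,
        Matrix.transpose_transpose]
    rw [this]; simp [smul_eq_mul]
  constructor
  · rintro ⟨htr, heq⟩
    have heq' : U * (V * (Uᵀ * Vᵀ)) = c • 1 := by
      simpa [mul_assoc] using heq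
    -- units
    have hU : IsUnit U := by
      have h1 : U * (c⁻¹ • (V * (Uᵀ * Vᵀ))) = 1 := by
        rw [Matrix.mul_smul, heq', smul_smul, inv_mul_cancel₀ hc, one_smul]
      exact IsUnit.of_mul_eq_one _ h1
    have hcyc1 : V * (Uᵀ * (Vᵀ * U)) = c • 1 := by
      have := cyc_smul_one c hc U (V * (Uᵀ * Vᵀ)) heq'
      simpa [mul_assoc] using this
    have hV : IsUnit V := by
      have h1 : V * (c⁻¹ • (Uᵀ * (Vᵀ * U))) = 1 := by
        rw [Matrix.mul_smul, hcyc1, smul_smul, inv_mul_cancel₀ hc, one_smul]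
      exact IsUnit.of_mul_eq_one _ h1
    have hUdet : IsUnit U.det := (Matrix.isUnit_iff_isUnit_det U).mp hU
    have hVdet : IsUnit V.det := (Matrix.isUnit_iff_isUnit_det V).mp hV
    have hZdet : IsUnit Z.det := by
      rw [hZ, Matrix.det_smul, Matrix.det_mul, Matrix.det_transpose]
      exact isUnit_iff_ne_zero.mpr (mul_ne_zero (pow_ne_zero _ h1q)
        (mul_ne_zero (isUnit_iff_ne_zero.mp hVdet) (isUnit_iff_ne_zero.mp hUdet)))
    have hZu : IsUnit Z := (Matrix.isUnit_iff_isUnit_det Z).mpr hZdet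
    have hZtdet : IsUnit Zᵀ.det := by rwa [Matrix.det_transpose]
    -- key identity: Uᵀ * V * U * Vᵀ = c • 1
    have hkey : Uᵀ * (V * (U * Vᵀ)) = c • 1 := by
      have ht := congrArg Matrix.transpose hcyc1
      simpa [Matrix.transpose_mul, Matrix.transpose_smul, mul_assoc] using ht
    refine ⟨hV, hZu, ?_, by rw [htrZ, htr, mul_one]⟩
    have hm : V⁻¹ * Z * V * Zᵀ = q • 1 := by
      rw [hZt, hZ]
      have hVinv : V⁻¹ * (V * Uᵀ) = Uᵀ := by
        rw [← mul_assoc, Matrix.nonsing_inv_mul V hVdet, one_mul]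
      calc V⁻¹ * ((1 + q) • (V * Uᵀ)) * V * ((1 + q) • (U * Vᵀ))
          = ((1 + q) * (1 + q)) • (V⁻¹ * (V * Uᵀ) * V * (U * Vᵀ)) := by
            simp only [Matrix.mul_smul, Matrix.smul_mul, smul_smul]
        _ = ((1 + q) * (1 + q)) • (Uᵀ * (V * (U * Vᵀ))) := by
            rw [hVinv, mul_assoc]
        _ = ((1 + q) * (1 + q)) • (c • (1 : Matrix (Fin n) (Fin n) ℂ)) := by rw [hkey]
        _ = q • 1 := by
            rw [smul_smul]
            congr 1
            rw [hcdef, sq]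
            field_simp
    have h3 : V⁻¹ * Z * V * (Zᵀ * (Zᵀ)⁻¹) = (q • (1 : Matrix (Fin n) (Fin n) ℂ)) * (Zᵀ)⁻¹ := by
      rw [← mul_assoc, hm]
    rw [Matrix.mul_nonsing_inv _ hZtdet, mul_one, Matrix.smul_mul, one_mul] at h3
    exact h3.symm
  · rintro ⟨hV, hZu, hqe, htr⟩
    have hVdet : IsUnit V.det := (Matrix.isUnit_iff_isUnit_det V).mp hV
    have hZdet : IsUnit Z.det := (Matrix.isUnit_iff_isUnit_det Z).mp hZu
    have hZtdet : IsUnit Zᵀ.det := by rwa [Matrix.det_transpose]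
    have htr1 : (U * Vᵀ).trace = 1 := by
      rw [htrZ] at htr
      have h5 : (1 + q) * (U * Vᵀ).trace = (1 + q) * 1 := by rw [mul_one]; exact htr
      exact mul_left_cancel₀ h1q h5
    refine ⟨htr1, ?_⟩
    -- from hqe : q • (Zᵀ)⁻¹ = V⁻¹ * Z * V
    have hm : V⁻¹ * Z * V * Zᵀ = q • 1 := by
      have := congrArg (· * Zᵀ) hqe
      rw [Matrix.smul_mul, Matrix.nonsing_inv_mul _ hZtdet] at this
      exact this.symm
    have hVinv : V⁻¹ * (V * Uᵀ) = Uᵀ := by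
      rw [← mul_assoc, Matrix.nonsing_inv_mul V hVdet, one_mul]
    have hm2 : ((1 + q) * (1 + q)) • (Uᵀ * (V * (U * Vᵀ))) = q • (1 : Matrix (Fin n) (Fin n) ℂ) := by
      calc ((1 + q) * (1 + q)) • (Uᵀ * (V * (U * Vᵀ)))
          = ((1 + q) * (1 + q)) • (V⁻¹ * (V * Uᵀ) * V * (U * Vᵀ)) := by
            rw [hVinv, mul_assoc]
        _ = V⁻¹ * ((1 + q) • (V * Uᵀ)) * V * ((1 + q) • (U * Vᵀ)) := by
            simp only [Matrix.mul_smul, Matrix.smul_mul, smul_smul]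
        _ = V⁻¹ * Z * V * Zᵀ := by rw [← hZ, ← hZt]
        _ = q • 1 := hm
    have hkey : Uᵀ * (V * (U * Vᵀ)) = c • 1 := by
      have h4 : Uᵀ * (V * (U * Vᵀ)) = ((1 + q) * (1 + q))⁻¹ • (((1 + q) * (1 + q)) • (Uᵀ * (V * (U * Vᵀ)))) := by
        rw [smul_smul, inv_mul_cancel₀ (mul_ne_zero h1q h1q), one_smul]
      rw [h4, hm2, smul_smul]
      congr 1
      rw [hcdef, sq, mul_comm]
    have hcyc : V * (U * (Vᵀ * Uᵀ)) = c • 1 := by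
      have := cyc_smul_one c hc Uᵀ (V * (U * Vᵀ)) hkey
      simpa [mul_assoc] using this
    have ht := congrArg Matrix.transpose hcyc
    simpa [Matrix.transpose_mul, Matrix.transpose_smul, mul_assoc] using ht
end

section
/- Let q ∈ ℂ with q ≠ 0, and let Z = diag(z_1, …, z_n) be a diagonal n×n complex matrix whose entries are pairwise distinct and satisfy z_i · z_{n+1−i} = q for all 1 ≤ i ≤ n. Then an invertible n×n complex matrix V satisfies q·(Zᵀ)^{−1} = V^{−1}·Z·V if and only if V is skew-diagonal with all of its anti-diagonal entries V_{i,n+1−i} nonzero. -/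
/-!
Since `z i * z (rev i) = q`, the left-hand side `q • (Zᵀ)⁻¹` is the diagonal matrix `Z'` with
entries `z (rev i)`, so the equation says `V * Z' = Z * V`, i.e. `(z i - z (rev j)) * V i j = 0`
for all `i, j`. As the `z i` are distinct, this forces `V i j = 0` off the anti-diagonal, and an
invertible matrix has no zero row, so the anti-diagonal entries are nonzero.
-/

open Matrix

namespace Matrix

variable {ι K : Type*} [Fintype ι] [DecidableEq ι] [Field K]

theorem smul_inv_diagonal_eq_diagonal_comp {q : K} (hq : q ≠ 0) {z : ι → K} {σ : ι → ι}
    (hz : ∀ i, z i * z (σ i) = q) : q • (diagonal z)⁻¹ = diagonal (z ∘ σ) := by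
  have hinv : (diagonal z)⁻¹ = q⁻¹ • diagonal (z ∘ σ) := by
    refine inv_eq_right_inv ?_
    rw [mul_smul_comm, diagonal_mul_diagonal]
    ext i j
    by_cases hij : i = j <;> simp [hij, one_apply, hz, hq]
  rw [hinv, smul_inv_smul₀ hq]

theorem mul_diagonal_eq_diagonal_mul_iff {R : Type*} [CommRing R] [IsDomain R]
    (V : Matrix ι ι R) (d z : ι → R) :
    V * diagonal d = diagonal z * V ↔ ∀ i j, z i ≠ d j → V i j = 0 := by
  simp only [← ext_iff, mul_diagonal, diagonal_mul]
  refine forall₂_congr fun i j => ⟨fun h hne => ?_, fun h => ?_⟩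
  · have : (z i - d j) * V i j = 0 := by linear_combination -h
    exact (mul_eq_zero.mp this).resolve_left (sub_ne_zero.mpr hne)
  · by_cases hzd : z i = d j
    · rw [hzd, mul_comm]
    · rw [h hzd, zero_mul, mul_zero]

theorem exists_ne_zero_of_isUnit {R : Type*} [CommRing R] [Nontrivial R] {V : Matrix ι ι R}
    (hV : IsUnit V) (i : ι) : ∃ j, V i j ≠ 0 := by
  by_contra! hrow
  exact (isUnit_iff_isUnit_det V).mp hV |>.ne_zero (det_eq_zero_of_row_eq_zero i hrow)

end Matrix

/-- let `q ≠ 0` and `Z = diag(z_1, …, z_n)` with pairwise distinct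
entries satisfying `z_i·z_{n+1−i} = q`. Then an invertible `V` satisfies
`q·(Zᵀ)⁻¹ = V⁻¹·Z·V` iff `V` is skew-diagonal (entry `(i,j)` vanishes whenever
`i + j ≠ n + 1`, i.e. `j ≠ rev i`) with all anti-diagonal entries nonzero. -/
theorem conj_eq_iff_skewDiagonal (n : ℕ) (q : ℂ) (hq : q ≠ 0)
    (z : Fin n → ℂ) (hdist : Function.Injective z)
    (hz : ∀ i : Fin n, z i * z i.rev = q)
    (V : Matrix (Fin n) (Fin n) ℂ) (hV : IsUnit V) :
    q • ((Matrix.diagonal z)ᵀ)⁻¹ = V⁻¹ * Matrix.diagonal z * V ↔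
      ((∀ i j : Fin n, j ≠ i.rev → V i j = 0) ∧ ∀ i : Fin n, V i i.rev ≠ 0) := by
  let := hV.invertible
  have hsupport : ∀ i j : Fin n, z i ≠ z j.rev ↔ j ≠ i.rev := fun i j => by
    rw [hdist.ne_iff, ne_eq, ne_eq, eq_comm, Fin.rev_eq_iff]
  rw [diagonal_transpose, smul_inv_diagonal_eq_diagonal_comp hq hz, eq_comm, mul_assoc,
    inv_mul_eq_iff_eq_mul_of_invertible, eq_comm, mul_diagonal_eq_diagonal_mul_iff]
  simp only [Function.comp_apply, hsupport]
  refine ⟨fun hskew => ⟨hskew, fun i hi => ?_⟩, fun h => h.1⟩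
  obtain ⟨j, hj⟩ := exists_ne_zero_of_isUnit hV i
  by_cases hji : j = i.rev
  · exact hj (hji ▸ hi)
  · exact hj (hskew i j hji)
end

section
/- Let n ≥ 1, let q ∈ ℂ with q ≠ 0 and q ≠ −1, let m ∈ ℂ satisfy m² = q·(1+q)^{−2}, and let z_1, …, z_n ∈ ℂ satisfy z_i · z_{n+1−i} = q for all i; if n is odd assume moreover z_{(n+1)/2} = m·(1+q). Then the system m·(1+q)·v^i = z_i·v^{n+1−i} (1 ≤ i ≤ n) has a solution with all v^i nonzero. More precisely, for every choice of nonzero values v^1, …, v^{⌈n/2⌉} there is a unique extension to a solution (v^1, …, v^n) of the system, namely v^{n+1−i} = m·(1+q)·v^i / z_i for 1 ≤ i ≤ ⌊n/2⌋, and this extension has all entries nonzero. -/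
/-!
With `c = m·(1+q)` one has `c² = q`, so `z_i z_{n+1-i} = c²`. The equations for `i` and for
`n+1-i` then determine each other: multiplying `c·v^i = z_i·v^{n+1-i}` by `z_{n+1-i}` turns it into
`c·v^{n+1-i} = z_{n+1-i}·v^i` after cancelling `c`. Hence only the equations with `i ≤ ⌊n/2⌋`
matter (the middle one for odd `n` reads `c = z_{(n+1)/2}`), and they express the upper half of
`v` through the lower half.
-/

namespace Fin

variable {n : ℕ}

theorem rev_lt_half_of_half_le {i : Fin n} (hi : (n + 1) / 2 ≤ (i : ℕ)) : (i.rev : ℕ) < n / 2 := by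
  rw [val_rev]; omega

theorem half_le_rev_of_lt_half {i : Fin n} (hi : (i : ℕ) < n / 2) : (n + 1) / 2 ≤ (i.rev : ℕ) := by
  rw [val_rev]; omega

theorem rev_eq_self_of_lt_half_succ {i : Fin n} (hi : (i : ℕ) < (n + 1) / 2) (hi' : n / 2 ≤ (i : ℕ)) :
    i.rev = i :=
  Fin.ext (by rw [val_rev]; omega)

end Fin

open Fin

section RevSystem

variable {K : Type*} [Field K] {n : ℕ} (c : K) (z : Fin n → K)

/-- System (8) with `c = m·(1+q)`; indices are 0-based, so `i.rev` plays the role of `n+1-i`. -/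
def SolvesRevSystem (v : Fin n → K) : Prop :=
  ∀ i, c * v i = z i * v i.rev

def revExtend (v₀ : Fin n → K) (i : Fin n) : K :=
  if (i : ℕ) < (n + 1) / 2 then v₀ i else c * v₀ i.rev / z i.rev

variable {c z}

theorem revExtend_of_lt {v₀ : Fin n → K} {i : Fin n} (hi : (i : ℕ) < (n + 1) / 2) :
    revExtend c z v₀ i = v₀ i :=
  if_pos hi

theorem revExtend_of_le {v₀ : Fin n → K} {i : Fin n} (hi : (n + 1) / 2 ≤ (i : ℕ)) :
    revExtend c z v₀ i = c * v₀ i.rev / z i.rev :=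
  if_neg (not_lt.mpr hi)

theorem revExtend_congr {v w : Fin n → K} (h : ∀ i : Fin n, (i : ℕ) < (n + 1) / 2 → v i = w i) :
    revExtend c z v = revExtend c z w := by
  funext i
  rcases lt_or_ge (i : ℕ) ((n + 1) / 2) with hi | hi
  · rw [revExtend_of_lt hi, revExtend_of_lt hi, h i hi]
  · have hir : (i.rev : ℕ) < (n + 1) / 2 := by have := rev_lt_half_of_half_le hi; omega
    rw [revExtend_of_le hi, revExtend_of_le hi, h _ hir]

theorem ne_zero_of_mul_rev_eq_sq (hc : c ≠ 0) (hz : ∀ i, z i * z i.rev = c ^ 2) (i : Fin n) :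
    z i ≠ 0 := by
  intro h
  apply pow_ne_zero 2 hc
  rw [← hz i, h, zero_mul]

theorem SolvesRevSystem.rev_eq_div {v : Fin n → K} (hv : SolvesRevSystem c z v) {i : Fin n}
    (hz : z i ≠ 0) : v i.rev = c * v i / z i := by
  rw [hv i, mul_div_cancel_left₀ _ hz]

theorem SolvesRevSystem.revExtend_eq {v : Fin n → K} (hv : SolvesRevSystem c z v)
    (hz : ∀ i, z i ≠ 0) : revExtend c z v = v := by
  funext i
  rcases lt_or_ge (i : ℕ) ((n + 1) / 2) with hi | hi
  · exact revExtend_of_lt hi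
  · rw [revExtend_of_le hi, ← hv.rev_eq_div (hz _), rev_rev]

theorem solvesRevSystem_of_rev_eq_div (hc : c ≠ 0) (hz : ∀ i, z i * z i.rev = c ^ 2)
    (hmid : ∀ i, i.rev = i → z i = c) {v : Fin n → K}
    (h : ∀ i : Fin n, (i : ℕ) < n / 2 → v i.rev = c * v i / z i) : SolvesRevSystem c z v := by
  have hz0 := ne_zero_of_mul_rev_eq_sq hc hz
  intro i
  rcases lt_or_ge (i : ℕ) (n / 2) with hlow | hlow
  · rw [h i hlow, mul_div_cancel₀ _ (hz0 i)]
  rcases lt_or_ge (i : ℕ) ((n + 1) / 2) with hcenter | hup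
  · have hfix := rev_eq_self_of_lt_half_succ hcenter hlow
    rw [hfix, hmid i hfix]
  · have hvi := h i.rev (rev_lt_half_of_half_le hup)
    rw [rev_rev, eq_div_iff (hz0 _)] at hvi
    have hzi := hz i.rev
    rw [rev_rev] at hzi
    apply mul_left_cancel₀ (hz0 i.rev)
    linear_combination c * hvi - v i.rev * hzi

theorem solvesRevSystem_revExtend (hc : c ≠ 0) (hz : ∀ i, z i * z i.rev = c ^ 2)
    (hmid : ∀ i, i.rev = i → z i = c) (v₀ : Fin n → K) :
    SolvesRevSystem c z (revExtend c z v₀) :=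
  solvesRevSystem_of_rev_eq_div hc hz hmid fun i hi => by
    rw [revExtend_of_le (half_le_rev_of_lt_half hi), rev_rev, revExtend_of_lt (by omega)]

theorem revExtend_ne_zero (hc : c ≠ 0) (hz : ∀ i, z i ≠ 0) {v₀ : Fin n → K}
    (hv₀ : ∀ i : Fin n, (i : ℕ) < (n + 1) / 2 → v₀ i ≠ 0) (i : Fin n) : revExtend c z v₀ i ≠ 0 := by
  rcases lt_or_ge (i : ℕ) ((n + 1) / 2) with hi | hi
  · rw [revExtend_of_lt hi]; exact hv₀ i hi
  · have hir : (i.rev : ℕ) < (n + 1) / 2 := by have := rev_lt_half_of_half_le hi; omega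
    rw [revExtend_of_le hi]
    exact div_ne_zero (mul_ne_zero hc (hv₀ _ hir)) (hz _)

theorem existsUnique_solvesRevSystem (hc : c ≠ 0) (hz : ∀ i, z i * z i.rev = c ^ 2)
    (hmid : ∀ i, i.rev = i → z i = c) (v₀ : Fin n → K) :
    ∃! v : Fin n → K, (∀ i : Fin n, (i : ℕ) < (n + 1) / 2 → v i = v₀ i) ∧ SolvesRevSystem c z v := by
  refine ⟨revExtend c z v₀, ⟨fun i hi => revExtend_of_lt hi, solvesRevSystem_revExtend hc hz hmid v₀⟩,
    fun v ⟨hv₀, hv⟩ => ?_⟩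
  rw [← hv.revExtend_eq (ne_zero_of_mul_rev_eq_sq hc hz), revExtend_congr hv₀]

end RevSystem

/-- let `n ≥ 1`, `q ≠ 0`, `q ≠ −1`, `m² = q·(1+q)⁻²`, and let
`z_1, …, z_n` satisfy `z_i·z_{n+1−i} = q` (with `z_{(n+1)/2} = m·(1+q)` if `n` is
odd, i.e. the 0-indexed middle entry `z ⟨n/2⟩`). Then system (8),
`m·(1+q)·v^i = z_i·v^{n+1−i}` (`1 ≤ i ≤ n`), has a solution with all `v^i` nonzero;
more precisely, every choice of nonzero values `v^1, …, v^{⌈n/2⌉}` (the indices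
`i` with 0-indexed value `< (n+1)/2`) extends uniquely to a solution, namely via
`v^{n+1−i} = m·(1+q)·v^i / z_i` for `1 ≤ i ≤ ⌊n/2⌋`, and all entries of this
extension are nonzero. -/
theorem system8_solvable (n : ℕ) (hn : 1 ≤ n) (q m : ℂ) (hq0 : q ≠ 0)
    (hq1 : q ≠ -1) (hm : m ^ 2 = q * ((1 + q) ^ 2)⁻¹)
    (z : Fin n → ℂ) (hz : ∀ i : Fin n, z i * z i.rev = q)
    (hodd : n % 2 = 1 → z ⟨n / 2, by omega⟩ = m * (1 + q)) :
    (∃ v : Fin n → ℂ, (∀ i : Fin n, v i ≠ 0) ∧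
        ∀ i : Fin n, m * (1 + q) * v i = z i * v i.rev) ∧
      ∀ v₀ : Fin n → ℂ, (∀ i : Fin n, (i : ℕ) < (n + 1) / 2 → v₀ i ≠ 0) →
        (∃! v : Fin n → ℂ,
            (∀ i : Fin n, (i : ℕ) < (n + 1) / 2 → v i = v₀ i) ∧
              ∀ i : Fin n, m * (1 + q) * v i = z i * v i.rev) ∧
          ∀ v : Fin n → ℂ,
            (∀ i : Fin n, (i : ℕ) < (n + 1) / 2 → v i = v₀ i) →
            (∀ i : Fin n, m * (1 + q) * v i = z i * v i.rev) →
            (∀ i : Fin n, v i ≠ 0) ∧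
              ∀ i : Fin n, (i : ℕ) < n / 2 → v i.rev = m * (1 + q) * v i / z i := by
  have hc2 : (m * (1 + q)) ^ 2 = q := by
    have h1q : 1 + q ≠ 0 := fun h => hq1 (by linear_combination h)
    field_simp at hm
    linear_combination hm
  have hc : m * (1 + q) ≠ 0 := fun h => hq0 (by rw [← hc2, h, zero_pow two_ne_zero])
  have hzc : ∀ i, z i * z i.rev = (m * (1 + q)) ^ 2 := by rwa [hc2]
  have hmid : ∀ i : Fin n, i.rev = i → z i = m * (1 + q) := fun i hi => by
    have hval := congrArg Fin.val hi
    rw [val_rev] at hval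
    rw [← hodd (by omega)]
    congr 1
    exact Fin.ext (by simp only; omega)
  have hz0 := ne_zero_of_mul_rev_eq_sq hc hzc
  refine ⟨⟨revExtend _ z 1, revExtend_ne_zero hc hz0 (fun _ _ => one_ne_zero),
    solvesRevSystem_revExtend hc hzc hmid 1⟩,
    fun v₀ hv₀ => ⟨existsUnique_solvesRevSystem hc hzc hmid v₀, fun v hvv₀ hv => ⟨?_,
      fun i _ => SolvesRevSystem.rev_eq_div hv (hz0 i)⟩⟩⟩
  rw [← SolvesRevSystem.revExtend_eq hv hz0, revExtend_congr hvv₀]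
  exact revExtend_ne_zero hc hz0 hv₀
end

section
/- Let n ≥ 1, let q ∈ ℂ with q ≠ 0 and q ≠ −1, and let U = (u_{ij}), V = (v^{kl}) be n×n complex matrices satisfying tr(U·Vᵀ) = 1 and U·V·Uᵀ·Vᵀ = q(1+q)^{−2}·I. Let S be the TL-type operator attached to q, U, V. Then for all indices k, l: Σ_{i₁,i₂,j₁,j₂,m} u_{i₁i₂} · v^{j₁j₂} · S_{j₂k}^{m i₂} · S_{j₁m}^{l i₁} = −q·(1+q)·M_k^l, where M_k^l := Σ_a u_{a k} · v^{l a}. -/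
/-!
With `S = q·1 − (1+q)·|U⟩⟨V|`, the sum is bilinear in the two copies of `S` and splits into four
contractions: the `δδ` term is `M = (V U)ₗₖ`, each mixed term is `tr(U Vᵀ)·M`, and the quartic
term is `(V U Vᵀ Uᵀ · V U)ₗₖ`. By (5), `tr(U Vᵀ) = 1` and, after transposing, `V U Vᵀ Uᵀ = q(1+q)⁻²·I`,
so the sum is `(q² − 2q(1+q) + q)·M = −q(1+q)·M`.
-/

open Matrix

section Contractions

variable {ι R : Type*} [Fintype ι] [CommSemiring R] (U V : Matrix ι ι R) (k l : ι)

theorem sum_outer_outer :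
    ∑ i₁, ∑ i₂, ∑ j₁, ∑ j₂, ∑ m, U i₁ i₂ * V j₁ j₂ * (U j₂ k * V m i₂) * (U j₁ m * V l i₁)
      = (V * (U * (Vᵀ * (Uᵀ * (V * U))))) l k := by
  simp only [mul_apply, transpose_apply, Finset.mul_sum]
  refine Finset.sum_congr rfl fun i₁ _ => Finset.sum_congr rfl fun i₂ _ => ?_
  rw [Finset.sum_comm_cycle]
  ac_rfl

variable [DecidableEq ι]

theorem sum_delta_delta :
    ∑ i₁, ∑ i₂, ∑ j₁, ∑ j₂, ∑ m, U i₁ i₂ * V j₁ j₂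
        * ((if j₂ = m then 1 else 0) * (if k = i₂ then 1 else 0))
        * ((if j₁ = l then 1 else 0) * (if m = i₁ then 1 else 0))
      = (V * U) l k := by
  simp [mul_apply, mul_comm]

theorem sum_delta_outer :
    ∑ i₁, ∑ i₂, ∑ j₁, ∑ j₂, ∑ m, U i₁ i₂ * V j₁ j₂
        * ((if j₂ = m then 1 else 0) * (if k = i₂ then 1 else 0)) * (U j₁ m * V l i₁)
      = (U * Vᵀ).trace * (V * U) l k := by
  simp only [mul_ite, mul_one, mul_zero, ite_mul, zero_mul, Finset.sum_ite_irrel, Finset.sum_ite_eq,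
    Finset.mem_univ, ↓reduceIte, Finset.sum_const_zero, trace, diag_apply, mul_apply, transpose_apply,
    Finset.mul_sum, Finset.sum_mul]
  ac_rfl

theorem sum_outer_delta :
    ∑ i₁, ∑ i₂, ∑ j₁, ∑ j₂, ∑ m, U i₁ i₂ * V j₁ j₂ * (U j₂ k * V m i₂)
        * ((if j₁ = l then 1 else 0) * (if m = i₁ then 1 else 0))
      = (U * Vᵀ).trace * (V * U) l k := by
  simp only [mul_ite, mul_one, mul_zero, Finset.sum_ite_eq', Finset.mem_univ, ↓reduceIte,
    Finset.sum_ite_irrel, Finset.sum_const_zero, trace, diag_apply, mul_apply, transpose_apply,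
    Finset.mul_sum, Finset.sum_mul]
  rw [Finset.sum_comm_cycle]
  ac_rfl

end Contractions

theorem sum_TLop_mul_TLop (n : ℕ) (q : ℂ) (U V : Matrix (Fin n) (Fin n) ℂ) (k l : Fin n) :
    ∑ i₁ : Fin n, ∑ i₂ : Fin n, ∑ j₁ : Fin n, ∑ j₂ : Fin n, ∑ m : Fin n,
        U i₁ i₂ * V j₁ j₂ * TLop n q U V (j₂, k) (m, i₂) * TLop n q U V (j₁, m) (l, i₁)
      = (q ^ 2 - 2 * q * (1 + q) * (U * Vᵀ).trace) * (V * U) l k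
        + (1 + q) ^ 2 * (V * U * Vᵀ * Uᵀ * (V * U)) l k := by
  have expand : ∀ i₁ i₂ j₁ j₂ m : Fin n,
      U i₁ i₂ * V j₁ j₂ * TLop n q U V (j₂, k) (m, i₂) * TLop n q U V (j₁, m) (l, i₁)
        = q ^ 2 * (U i₁ i₂ * V j₁ j₂
            * ((if j₂ = m then 1 else 0) * (if k = i₂ then 1 else 0))
            * ((if j₁ = l then 1 else 0) * (if m = i₁ then 1 else 0)))
          - q * (1 + q) * (U i₁ i₂ * V j₁ j₂
            * ((if j₂ = m then 1 else 0) * (if k = i₂ then 1 else 0)) * (U j₁ m * V l i₁))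
          - q * (1 + q) * (U i₁ i₂ * V j₁ j₂ * (U j₂ k * V m i₂)
            * ((if j₁ = l then 1 else 0) * (if m = i₁ then 1 else 0)))
          + (1 + q) ^ 2 * (U i₁ i₂ * V j₁ j₂ * (U j₂ k * V m i₂) * (U j₁ m * V l i₁)) := by
    intro i₁ i₂ j₁ j₂ m
    simp only [TLop]
    ring
  simp only [expand, Finset.sum_add_distrib, Finset.sum_sub_distrib, ← Finset.mul_sum]
  rw [sum_delta_delta, sum_delta_outer, sum_outer_delta, sum_outer_outer]
  simp only [Matrix.mul_assoc]
  ring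

theorem pairing_det_t_first_general (n : ℕ) (q : ℂ)
    (hq1 : q ≠ -1) (U V : Matrix (Fin n) (Fin n) ℂ)
    (h5a : (U * Vᵀ).trace = 1)
    (h5b : U * V * Uᵀ * Vᵀ = (q * ((1 + q) ^ 2)⁻¹) • (1 : Matrix (Fin n) (Fin n) ℂ))
    (k l : Fin n) :
    ∑ i₁ : Fin n, ∑ i₂ : Fin n, ∑ j₁ : Fin n, ∑ j₂ : Fin n, ∑ m : Fin n,
        U i₁ i₂ * V j₁ j₂ * TLop n q U V (j₂, k) (m, i₂) * TLop n q U V (j₁, m) (l, i₁)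
      = -q * (1 + q) * ∑ a : Fin n, U a k * V l a := by
  have hq : 1 + q ≠ 0 := fun h => hq1 (by linear_combination h)
  have hVU : V * U * Vᵀ * Uᵀ = (q * ((1 + q) ^ 2)⁻¹) • (1 : Matrix (Fin n) (Fin n) ℂ) := by
    simpa [Matrix.mul_assoc] using congrArg transpose h5b
  have hM : (V * U) l k = ∑ a, U a k * V l a := by simp only [mul_apply, mul_comm]
  rw [sum_TLop_mul_TLop, h5a, hVU, smul_mul, Matrix.one_mul, Matrix.smul_apply, hM, smul_eq_mul]
  field_simp
  ring

/-- Proposition 1, first formula, rank `p = 2`: if `U`, `V` satisfy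
system (5) then for all `k`, `l`:
`Σ u_{i₁i₂}·v^{j₁j₂}·S_{j₂k}^{m i₂}·S_{j₁m}^{l i₁} = −q·(1+q)·M_k^l`,
where `M_k^l = Σ_a u_{ak}·v^{la}`. -/
theorem pairing_det_t_first (n : ℕ) (hn : 1 ≤ n) (q : ℂ) (hq0 : q ≠ 0)
    (hq1 : q ≠ -1) (U V : Matrix (Fin n) (Fin n) ℂ)
    (h5a : (U * Vᵀ).trace = 1)
    (h5b : U * V * Uᵀ * Vᵀ = (q * ((1 + q) ^ 2)⁻¹) • (1 : Matrix (Fin n) (Fin n) ℂ))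
    (k l : Fin n) :
    ∑ i₁ : Fin n, ∑ i₂ : Fin n, ∑ j₁ : Fin n, ∑ j₂ : Fin n, ∑ m : Fin n,
        U i₁ i₂ * V j₁ j₂ * TLop n q U V (j₂, k) (m, i₂) * TLop n q U V (j₁, m) (l, i₁)
      = -q * (1 + q) * ∑ a : Fin n, U a k * V l a :=
  pairing_det_t_first_general n q hq1 U V h5a h5b k l
end

section
/- Let n ≥ 1, let q ∈ ℂ with q ≠ 0 and q ≠ −1, and let U = (u_{ij}), V = (v^{kl}) be n×n complex matrices satisfying tr(U·Vᵀ) = 1 and U·V·Uᵀ·Vᵀ = q(1+q)^{−2}·I. Let S be the TL-type operator attached to q, U, V. Then for all indices k, l: Σ_{i₁,i₂,j₁,j₂,m} u_{i₁i₂} · v^{j₁j₂} · S_{k j₁}^{i₁ m} · S_{m j₂}^{i₂ l} = −q·(1+q)·N_k^l, where N_k^l := Σ_a u_{k a} · v^{a l}. -/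
open Matrix

lemma sum3_rev {α : Type*} [Fintype α] (f : α → α → α → ℂ) :
    ∑ a, ∑ b, ∑ c, f a b c = ∑ c, ∑ b, ∑ a, f a b c := by
  calc ∑ a, ∑ b, ∑ c, f a b c
      = ∑ a, ∑ c, ∑ b, f a b c := Finset.sum_congr rfl fun a _ => Finset.sum_comm
    _ = ∑ c, ∑ a, ∑ b, f a b c := Finset.sum_comm
    _ = ∑ c, ∑ b, ∑ a, f a b c := Finset.sum_congr rfl fun c _ => Finset.sum_comm

/-- Proposition 1, second formula, rank `p = 2`: if `U`, `V` satisfy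
system (5) then for all `k`, `l`:
`Σ u_{i₁i₂}·v^{j₁j₂}·S_{k j₁}^{i₁ m}·S_{m j₂}^{i₂ l} = −q·(1+q)·N_k^l`,
where `N_k^l = Σ_a u_{ka}·v^{al}`. -/
theorem pairing_det_t_second (n : ℕ) (hn : 1 ≤ n) (q : ℂ) (hq0 : q ≠ 0)
    (hq1 : q ≠ -1) (U V : Matrix (Fin n) (Fin n) ℂ)
    (h5a : (U * Vᵀ).trace = 1)
    (h5b : U * V * Uᵀ * Vᵀ = (q * ((1 + q) ^ 2)⁻¹) • (1 : Matrix (Fin n) (Fin n) ℂ))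
    (k l : Fin n) :
    ∑ i₁ : Fin n, ∑ i₂ : Fin n, ∑ j₁ : Fin n, ∑ j₂ : Fin n, ∑ m : Fin n,
        U i₁ i₂ * V j₁ j₂ * TLop n q U V (k, j₁) (i₁, m) * TLop n q U V (m, j₂) (i₂, l)
      = -q * (1 + q) * ∑ a : Fin n, U k a * V a l := by
  have hq1' : (1 : ℂ) + q ≠ 0 := fun h => hq1 (by linear_combination h)
  have htr : ∑ i : Fin n, ∑ j : Fin n, U i j * V i j = 1 := by
    simpa [Matrix.trace, Matrix.mul_apply, Matrix.diag] using h5a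
  have h5b' : ∀ a b : Fin n, ∑ j₁ : Fin n, ∑ j₂ : Fin n, ∑ m : Fin n,
      U a j₁ * V j₁ j₂ * U m j₂ * V b m
      = q * ((1 + q) ^ 2)⁻¹ * (if a = b then 1 else 0) := by
    intro a b
    have h := congrFun (congrFun h5b a) b
    simp only [Matrix.mul_apply, Matrix.transpose_apply, Matrix.smul_apply,
      Matrix.one_apply, smul_eq_mul, Finset.sum_mul, mul_ite, mul_one, mul_zero] at h
    rw [sum3_rev, h]
    split <;> ring
  have expand : ∀ i₁ i₂ j₁ j₂ m : Fin n,
      U i₁ i₂ * V j₁ j₂ * TLop n q U V (k, j₁) (i₁, m) * TLop n q U V (m, j₂) (i₂, l)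
    = (if k = i₁ then 1 else 0) * (if j₁ = m then 1 else 0) * (if m = i₂ then 1 else 0)
        * (if j₂ = l then 1 else 0) * (q * q * (U i₁ i₂ * V j₁ j₂))
      - (if k = i₁ then 1 else 0) * (if j₁ = m then 1 else 0)
        * (q * (1 + q) * (U i₁ i₂ * V j₁ j₂ * U m j₂ * V i₂ l))
      - (if m = i₂ then 1 else 0) * (if j₂ = l then 1 else 0)
        * (q * (1 + q) * (U i₁ i₂ * V j₁ j₂ * U k j₁ * V i₁ m))
      + ((1 + q) * (1 + q)) * (U i₁ i₂ * V j₁ j₂ * U k j₁ * V i₁ m * U m j₂ * V i₂ l) := by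
    intro i₁ i₂ j₁ j₂ m
    simp only [TLop]
    ring
  simp only [expand, Finset.sum_add_distrib, Finset.sum_sub_distrib, ite_mul, one_mul,
    zero_mul, Finset.sum_ite_eq, Finset.sum_ite_eq', Finset.mem_univ, if_true,
    Finset.sum_ite_irrel, Finset.sum_const_zero]
  have h1 : ∑ x : Fin n, q * q * (U k x * V x l) = q * q * ∑ a : Fin n, U k a * V a l :=
    (Finset.mul_sum _ _ _).symm
  have h2 : ∑ x : Fin n, ∑ y : Fin n, ∑ z : Fin n,
      q * (1 + q) * (U k x * V y z * U y z * V x l)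
      = q * (1 + q) * ∑ a : Fin n, U k a * V a l := by
    calc ∑ x : Fin n, ∑ y : Fin n, ∑ z : Fin n,
        q * (1 + q) * (U k x * V y z * U y z * V x l)
        = ∑ x : Fin n, (q * (1 + q) * (U k x * V x l))
            * ∑ y : Fin n, ∑ z : Fin n, U y z * V y z := by
          refine Finset.sum_congr rfl fun x _ => ?_
          rw [Finset.mul_sum]
          refine Finset.sum_congr rfl fun y _ => ?_
          rw [Finset.mul_sum]
          exact Finset.sum_congr rfl fun z _ => by ring
      _ = ∑ x : Fin n, (q * (1 + q) * (U k x * V x l)) * 1 := by rw [htr]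
      _ = q * (1 + q) * ∑ a : Fin n, U k a * V a l := by
          simp only [mul_one]
          rw [← Finset.mul_sum]
  have h3 : ∑ x : Fin n, ∑ y : Fin n, ∑ z : Fin n,
      q * (1 + q) * (U x y * V z l * U k z * V x y)
      = q * (1 + q) * ∑ a : Fin n, U k a * V a l := by
    calc ∑ x : Fin n, ∑ y : Fin n, ∑ z : Fin n,
        q * (1 + q) * (U x y * V z l * U k z * V x y)
        = ∑ x : Fin n, ∑ y : Fin n, (U x y * V x y)
            * (q * (1 + q) * ∑ a : Fin n, U k a * V a l) := by
          refine Finset.sum_congr rfl fun x _ => Finset.sum_congr rfl fun y _ => ?_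
          rw [Finset.mul_sum, Finset.mul_sum]
          exact Finset.sum_congr rfl fun z _ => by ring
      _ = (∑ x : Fin n, ∑ y : Fin n, U x y * V x y)
            * (q * (1 + q) * ∑ a : Fin n, U k a * V a l) := by
          rw [Finset.sum_mul]
          exact Finset.sum_congr rfl fun x _ => (Finset.sum_mul _ _ _).symm
      _ = q * (1 + q) * ∑ a : Fin n, U k a * V a l := by rw [htr, one_mul]
  have hfac : ∀ i₁ : Fin n, ∑ i₂ : Fin n, ∑ j₁ : Fin n, ∑ j₂ : Fin n, ∑ m : Fin n,
      (1 + q) * (1 + q) * (U i₁ i₂ * V j₁ j₂ * U k j₁ * V i₁ m * U m j₂ * V i₂ l)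
      = if k = i₁ then q * ∑ i₂ : Fin n, U i₁ i₂ * V i₂ l else 0 := by
    intro i₁
    calc ∑ i₂ : Fin n, ∑ j₁ : Fin n, ∑ j₂ : Fin n, ∑ m : Fin n,
        (1 + q) * (1 + q) * (U i₁ i₂ * V j₁ j₂ * U k j₁ * V i₁ m * U m j₂ * V i₂ l)
        = ∑ i₂ : Fin n, ((1 + q) * (1 + q) * (U i₁ i₂ * V i₂ l))
            * ∑ j₁ : Fin n, ∑ j₂ : Fin n, ∑ m : Fin n,
                U k j₁ * V j₁ j₂ * U m j₂ * V i₁ m := by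
          refine Finset.sum_congr rfl fun i₂ _ => ?_
          rw [Finset.mul_sum]
          refine Finset.sum_congr rfl fun j₁ _ => ?_
          rw [Finset.mul_sum]
          refine Finset.sum_congr rfl fun j₂ _ => ?_
          rw [Finset.mul_sum]
          exact Finset.sum_congr rfl fun m _ => by ring
      _ = ∑ i₂ : Fin n, ((1 + q) * (1 + q) * (U i₁ i₂ * V i₂ l))
            * (q * ((1 + q) ^ 2)⁻¹ * (if k = i₁ then 1 else 0)) := by
          rw [h5b' k i₁]
      _ = if k = i₁ then q * ∑ i₂ : Fin n, U i₁ i₂ * V i₂ l else 0 := by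
          by_cases hki : k = i₁
          · simp only [if_pos hki]
            have hterm : ∀ x : Fin n,
                (1 + q) * (1 + q) * (U i₁ x * V x l) * (q * ((1 + q) ^ 2)⁻¹ * 1)
                  = q * (U i₁ x * V x l) := by
              intro x
              field_simp
            simp only [hterm]
            rw [← Finset.mul_sum]
          · simp only [if_neg hki]
            simp
  have h4 : ∑ i₁ : Fin n, ∑ i₂ : Fin n, ∑ j₁ : Fin n, ∑ j₂ : Fin n, ∑ m : Fin n,
      (1 + q) * (1 + q) * (U i₁ i₂ * V j₁ j₂ * U k j₁ * V i₁ m * U m j₂ * V i₂ l)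
      = q * ∑ a : Fin n, U k a * V a l := by
    rw [Finset.sum_congr rfl fun i₁ _ => hfac i₁, Finset.sum_ite_eq]
    simp
  rw [h1, h2, h3, h4]
  ring
end

section
/- Let n ≥ 1, let q ∈ ℂ, and let U, V be skew-diagonal n×n complex matrices with anti-diagonal entries u_i := u_{i,n+1−i}, v^i := v^{i,n+1−i}; set z_i := (1+q)·u_i·v^i. Let G be the Gram matrix of the canonical pairing attached to q, U, V. Then (det G)² = ∏_{i=1}^{n} (q − z_i)² · ∏_{(i,j) ∈ I(n)} (q² − z_{n+1−i}·z_j), where I(n) := {(i,j) : 1 ≤ i, j ≤ n, i + j ≠ n+1}. -/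
/-!
Swapping the two halves of the column index turns the Gram matrix of skew-diagonal `U`, `V`
into `M = q • 1 + diagonal b * P`, where `P` is the permutation matrix of the involution
`τ (i, j) = (n+1−j, n+1−i)` and `b (i, j) = −(1+q) u_{n+1−i} v^j`. So `M` is block diagonal,
with `1 × 1` blocks `q + b p` at the fixed points `j = n+1−i` and `2 × 2` blocks
`[[q, b p], [b (τ p), q]]` on the 2-cycles. Replacing each 2-cycle block by its adjugate gives
a matrix `N` that is conjugate to `M` by a diagonal matrix of signs, and `M * N` is diagonal
with entries `(q + b p)²` and `q² − b p b (τ p) = q² − z_{n+1−i} z_j`; hence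
`det M ^ 2 = det (M * N)`.
-/

open Matrix

/-- The Gram matrix of the canonical pairing attached to `q`, `U`, `V`: the
`n² × n²` matrix whose entry at row `(i,j)` and column `(k,l)` is
`S_{ki}^{jl} = q·δ_k^j·δ_i^l − (1+q)·u_{ki}·v^{jl}`, where `S` is the TL-type
operator attached to `q`, `U`, `V`. -/
def gramTL (n : ℕ) (q : ℂ) (U V : Matrix (Fin n) (Fin n) ℂ) :
    Matrix (Fin n × Fin n) (Fin n × Fin n) ℂ :=
  fun p r =>
    q * (if r.1 = p.2 then 1 else 0) * (if p.1 = r.2 then 1 else 0)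
      - (1 + q) * U r.1 p.1 * V p.2 r.2

open Equiv Function

lemma Function.Involutive.exists_sign_mul_apply_eq_neg_one {α R : Type*} [Ring R] {f : α → α}
    (hf : Involutive f) :
    ∃ ε : α → R, (∀ p, ε p * ε p = 1) ∧ ∀ p, f p ≠ p → ε p * ε (f p) = -1 := by
  let _ : LinearOrder α := WellOrderingRel.isWellOrder.linearOrder
  refine ⟨fun p => if p < f p then 1 else -1, fun p => ?_, fun p hp => ?_⟩
  · dsimp only
    split_ifs <;> simp
  · rcases hp.lt_or_gt with h | h <;> simp [hf p, h, not_lt_of_gt h]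

namespace Matrix

variable {α R : Type*} [Fintype α] [DecidableEq α] [CommRing R]

lemma det_submatrix_id_perm_sq (σ : Perm α) (A : Matrix α α R) :
    (A.submatrix id σ).det ^ 2 = A.det ^ 2 := by
  rw [det_permute', mul_pow, ← Int.cast_pow, ← Units.val_pow_eq_pow_val, Int.units_sq]
  simp

lemma scalar_add_diagonal_mul_permMatrix_apply (τ : Perm α) (q : R) (b : α → R) (p r : α) :
    (scalar α q + diagonal b * τ.permMatrix R) p r =
      (if p = r then q else 0) + if τ p = r then b p else 0 := by
  simp [diagonal_apply, PEquiv.toMatrix_apply]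

theorem det_sq_scalar_add_diagonal_mul_permMatrix {τ : Perm α} (hτ : Involutive τ) (q : R)
    (b : α → R) :
    (scalar α q + diagonal b * τ.permMatrix R).det ^ 2 =
      ∏ p, if τ p = p then (q + b p) ^ 2 else q ^ 2 - b p * b (τ p) := by
  obtain ⟨ε, hε_sq, hε_anti⟩ := hτ.exists_sign_mul_apply_eq_neg_one (R := R)
  set M := scalar α q + diagonal b * τ.permMatrix R
  set N := scalar α q + diagonal (fun p => if τ p = p then b p else -b p) * τ.permMatrix R
  have hconj : N = diagonal ε * M * diagonal ε := by
    ext p r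
    simp only [M, N, diagonal_mul, mul_diagonal, scalar_add_diagonal_mul_permMatrix_apply]
    by_cases hpr : p = r
    · subst hpr
      simp only [if_true]
      split_ifs
      · linear_combination (-q - b p) * hε_sq p
      · linear_combination (-q) * hε_sq p
    · by_cases hτp : τ p = r
      · subst hτp
        simp only [if_true, if_neg hpr, if_neg (Ne.symm hpr), zero_add]
        linear_combination (-b p) * hε_anti p (Ne.symm hpr)
      · simp [hpr, hτp]
  have hprod : M * N =
      diagonal fun p => if τ p = p then (q + b p) ^ 2 else q ^ 2 - b p * b (τ p) := by
    ext p r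
    simp only [M, N, mul_apply, scalar_add_diagonal_mul_permMatrix_apply, add_mul, ite_mul,
      zero_mul, Finset.sum_add_distrib, Finset.sum_ite_eq, Finset.mem_univ, if_true, hτ p,
      diagonal_apply]
    by_cases hfix : τ p = p
    · simp only [hfix, if_true]
      split_ifs <;> ring
    · simp only [hfix, if_false, Ne.symm hfix]
      split_ifs <;> ring
  have hdet_conj : (diagonal ε * M * diagonal ε).det = M.det := by
    have hε : diagonal ε * diagonal ε = 1 := by
      rw [diagonal_mul_diagonal, ← diagonal_one]
      exact congrArg diagonal (funext hε_sq)
    rw [det_mul, det_mul, mul_right_comm, ← det_mul, hε, det_one, one_mul]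
  calc M.det ^ 2 = (M * N).det := by rw [det_mul, hconj, hdet_conj, sq]
    _ = _ := by rw [hprod, det_diagonal]

end Matrix

def antiTranspose (n : ℕ) : Perm (Fin n × Fin n) :=
  Involutive.toPerm (fun p => (p.2.rev, p.1.rev)) fun p => by simp

lemma antiTranspose_apply (n : ℕ) (p : Fin n × Fin n) :
    antiTranspose n p = (p.2.rev, p.1.rev) := rfl

lemma involutive_antiTranspose (n : ℕ) : Involutive (antiTranspose n) := fun p => by
  simp [antiTranspose_apply]

lemma antiTranspose_eq_self_iff {n : ℕ} {p : Fin n × Fin n} :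
    antiTranspose n p = p ↔ p.2 = p.1.rev := by
  rw [antiTranspose_apply, Prod.ext_iff, Fin.rev_eq_iff, eq_comm (a := p.1.rev)]
  exact and_iff_right_of_imp fun h => by rw [h]

lemma gramTL_submatrix_prodComm {n : ℕ} {q : ℂ} {U V : Matrix (Fin n) (Fin n) ℂ}
    (hU : ∀ i j : Fin n, j ≠ i.rev → U i j = 0) (hV : ∀ i j : Fin n, j ≠ i.rev → V i j = 0) :
    (gramTL n q U V).submatrix id (prodComm _ _) =
      scalar _ q + diagonal (fun p => -((1 + q) * U p.1.rev p.1 * V p.2 p.2.rev)) *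
        (antiTranspose n).permMatrix ℂ := by
  ext p r
  rw [scalar_add_diagonal_mul_permMatrix_apply, antiTranspose_apply]
  simp only [submatrix_apply, gramTL, id, prodComm_apply, Prod.fst_swap, Prod.snd_swap]
  obtain ⟨i, j⟩ := p
  obtain ⟨k, l⟩ := r
  simp only [Prod.mk.injEq]
  by_cases hkl : j.rev = k ∧ i.rev = l
  · obtain ⟨rfl, rfl⟩ := hkl
    by_cases hij : i = j.rev
    · subst hij
      simp [sub_eq_add_neg]
    · have hji : i.rev ≠ j := fun h => hij (by rw [← h, Fin.rev_rev])
      simp [hij, hji]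
  · have hUV : U l i * V j k = 0 := by
      by_cases hl : i.rev = l
      · exact mul_eq_zero_of_right _ (hV j k fun hk => hkl ⟨hk.symm, hl⟩)
      · exact mul_eq_zero_of_left (hU l i fun hi => hl (by rw [hi, Fin.rev_rev])) _
    rw [if_neg hkl, mul_assoc (1 + q), hUV]
    split_ifs <;> grind

/-- Proposition 4: for skew-diagonal `U`, `V` with anti-diagonal
entries `u_i := U i (rev i)`, `v^i := V i (rev i)` and `z_i := (1+q)·u_i·v^i`,
the Gram matrix `G` of the canonical pairing satisfies
`(det G)² = ∏_i (q − z_i)² · ∏_{(i,j) : i+j ≠ n+1} (q² − z_{n+1−i}·z_j)`. -/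
theorem gram_det_squared (n : ℕ) (q : ℂ) (U V : Matrix (Fin n) (Fin n) ℂ)
    (hU0 : ∀ i j : Fin n, j ≠ i.rev → U i j = 0)
    (hV0 : ∀ i j : Fin n, j ≠ i.rev → V i j = 0)
    (z : Fin n → ℂ) (hz : ∀ i : Fin n, z i = (1 + q) * U i i.rev * V i i.rev) :
    (gramTL n q U V).det ^ 2 =
      (∏ i : Fin n, (q - z i) ^ 2) *
        ∏ p ∈ Finset.univ.filter (fun p : Fin n × Fin n => p.2 ≠ p.1.rev),
          (q ^ 2 - z p.1.rev * z p.2) := by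
  rw [← det_submatrix_id_perm_sq (prodComm _ _), gramTL_submatrix_prodComm hU0 hV0,
    det_sq_scalar_add_diagonal_mul_permMatrix (involutive_antiTranspose n)]
  simp_rw [antiTranspose_eq_self_iff, Finset.prod_ite]
  congr 1
  · rw [Finset.prod_filter, Fintype.prod_prod_type_right]
    refine Finset.prod_congr rfl fun j _ => ?_
    simp only [eq_comm (a := j), Fin.rev_eq_iff, Finset.prod_ite_eq', Finset.mem_univ, if_true,
      Fin.rev_rev, hz]
    ring
  · refine Finset.prod_congr (by simp) fun p _ => ?_
    simp only [antiTranspose_apply, Fin.rev_rev, hz]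
    ring
end

section
/- Let n ≥ 2, let q ∈ ℂ with q ≠ 0 and q ≠ 1, and let U, V be skew-diagonal n×n complex matrices with z_i := (1+q)·u_i·v^i satisfying z_i·z_{n+1−i} = q for all 1 ≤ i ≤ n. Let G be the Gram matrix of the canonical pairing attached to q, U, V. Then det G = 0 if and only if either z_i = q for some i, or z_{n+1−i}·z_j = q² for some pair i ≠ j with i + j ≠ n+1. -/
/-!
By skew-diagonality, `G` acts on vectors by `(G x)(i, j) = q x(j, i) - c(j, i) x(i', j')`, where
`i' = n + 1 - i` and `c(a, b) = (1 + q) u_{b'b} v^{aa'}`. So `x` lies in the kernel iff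
`q x(p) = c(p) x(φ p)` for all `p`, with `φ (a, b) = (b', a')` an involution. Such a system
decouples along the orbits of `φ`: a fixed point `(a, a')` carries a solution iff `c(a, a') = z_a`
equals `q`, and a two-point orbit `{p, φ p}` iff `c(p) c(φ p) = q²`, where
`c(a, b) c(b', a') = z_a z_{b'}`. The orbits through the diagonal never qualify, since
`z_a z_{a'} = q ≠ q²`.
-/

open Matrix

namespace Function.Involutive

variable {ι K : Type*} [Field K] {φ : ι → ι} {c x : ι → K} {q : K}

theorem fixed_or_pair_of_mul_eq_mul_comp (hφ : Involutive φ)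
    (hx : ∀ m, q * x m = c m * x (φ m)) {m : ι} (hm : x m ≠ 0) :
    (φ m = m ∧ c m = q) ∨ (φ m ≠ m ∧ c m * c (φ m) = q ^ 2) := by
  by_cases hfix : φ m = m
  · have := hx m
    rw [hfix] at this
    exact .inl ⟨hfix, (mul_right_cancel₀ hm this).symm⟩
  · refine .inr ⟨hfix, mul_right_cancel₀ hm ?_⟩
    calc c m * c (φ m) * x m = c m * (c (φ m) * x (φ (φ m))) := by rw [hφ m]; ring
      _ = q ^ 2 * x m := by rw [← hx, mul_left_comm, ← hx]; ring

variable [DecidableEq ι]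

theorem mul_single_eq_mul_comp (hφ : Involutive φ) {m : ι} (hfix : φ m = m) (hc : c m = q)
    (m' : ι) : q * (Pi.single m 1 : ι → K) m' = c m' * (Pi.single m 1 : ι → K) (φ m') := by
  by_cases h : m' = m
  · subst h; simp [hfix, hc]
  · have : φ m' ≠ m := fun h' => h (by rw [← hφ m', h', hfix])
    simp [h, this]

theorem mul_pair_eq_mul_comp (hφ : Involutive φ) {m : ι} (hfix : φ m ≠ m)
    (hc : c m * c (φ m) = q ^ 2) (m' : ι) :
    q * (Pi.single m (c m) + Pi.single (φ m) q : ι → K) m' =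
      c m' * (Pi.single m (c m) + Pi.single (φ m) q : ι → K) (φ m') := by
  by_cases h₁ : m' = m
  · subst h₁
    simp only [Pi.add_apply, Pi.single_eq_same, Pi.single_eq_of_ne hfix,
      Pi.single_eq_of_ne hfix.symm, add_zero, zero_add]
    ring
  by_cases h₂ : m' = φ m
  · subst h₂
    simp only [Pi.add_apply, Pi.single_eq_same, Pi.single_eq_of_ne hfix,
      Pi.single_eq_of_ne hfix.symm, hφ m, add_zero, zero_add]
    rw [← sq, ← hc, mul_comm]
  have h₁' : φ m' ≠ φ m := fun h => h₁ (hφ.injective h)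
  have h₂' : φ m' ≠ m := fun h => h₂ (by rw [← h, hφ m'])
  simp [h₁, h₂, h₁', h₂']

theorem exists_ne_zero_mul_eq_mul_comp_iff (hφ : Involutive φ) (hq : q ≠ 0) :
    (∃ x : ι → K, x ≠ 0 ∧ ∀ m, q * x m = c m * x (φ m)) ↔
      ∃ m, (φ m = m ∧ c m = q) ∨ (φ m ≠ m ∧ c m * c (φ m) = q ^ 2) := by
  constructor
  · rintro ⟨x, hx0, hx⟩
    obtain ⟨m, hm⟩ := Function.ne_iff.mp hx0
    exact ⟨m, hφ.fixed_or_pair_of_mul_eq_mul_comp hx hm⟩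
  · rintro ⟨m, ⟨hfix, hc⟩ | ⟨hfix, hc⟩⟩
    · exact ⟨Pi.single m 1, by simp, hφ.mul_single_eq_mul_comp hfix hc⟩
    · refine ⟨_, Function.ne_iff.mpr ⟨φ m, ?_⟩, hφ.mul_pair_eq_mul_comp hfix hc⟩
      simp [Ne.symm hfix, hq]

end Function.Involutive

namespace Matrix

variable {n : ℕ} {R : Type*} [Zero R]

def IsSkewDiagonal (U : Matrix (Fin n) (Fin n) R) : Prop :=
  ∀ i j, j ≠ i.rev → U i j = 0

variable {U : Matrix (Fin n) (Fin n) R}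

theorem IsSkewDiagonal.apply_eq_ite (hU : U.IsSkewDiagonal) (i j : Fin n) :
    U i j = if j = i.rev then U i i.rev else 0 := by
  split_ifs with h
  · rw [h]
  · exact hU i j h

theorem IsSkewDiagonal.apply_eq_ite' (hU : U.IsSkewDiagonal) (i j : Fin n) :
    U i j = if i = j.rev then U j.rev j else 0 := by
  split_ifs with h
  · rw [h]
  · exact hU i j fun h' => h (by rw [h', Fin.rev_rev])

end Matrix

section Gram

variable {n : ℕ} {q : ℂ} {U V : Matrix (Fin n) (Fin n) ℂ}

theorem gramTL_apply (hU : U.IsSkewDiagonal) (hV : V.IsSkewDiagonal) (i j k l : Fin n) :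
    gramTL n q U V (i, j) (k, l) =
      (if (k, l) = (j, i) then q else 0) -
        if (k, l) = (i.rev, j.rev) then (1 + q) * U i.rev i * V j j.rev else 0 := by
  rw [gramTL, hU.apply_eq_ite' k i, hV.apply_eq_ite j l]
  simp only [Prod.mk.injEq, mul_ite, ite_mul, mul_one, mul_zero, zero_mul, eq_comm (a := i),
    ← ite_and, and_comm (a := l = i), and_comm (a := l = j.rev)]

theorem gramTL_mulVec_apply (hU : U.IsSkewDiagonal) (hV : V.IsSkewDiagonal)
    (x : Fin n × Fin n → ℂ) (i j : Fin n) :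
    (gramTL n q U V *ᵥ x) (i, j) =
      q * x (j, i) - (1 + q) * U i.rev i * V j j.rev * x (i.rev, j.rev) := by
  simp [mulVec, dotProduct, gramTL_apply hU hV, sub_mul, Finset.sum_sub_distrib, ite_mul]

def skewSwap (p : Fin n × Fin n) : Fin n × Fin n :=
  (p.2.rev, p.1.rev)

theorem skewSwap_involutive : Function.Involutive (skewSwap (n := n)) := fun p => by
  simp [skewSwap]

theorem skewSwap_mk_eq_self_iff {i j : Fin n} : skewSwap (i, j) = (i, j) ↔ j = i.rev := by
  rw [skewSwap, Prod.mk.injEq, Fin.rev_eq_iff, and_iff_left_iff_imp]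
  rintro rfl
  rfl

variable (q U V) in
def gramWeight (p : Fin n × Fin n) : ℂ :=
  (1 + q) * U p.2.rev p.2 * V p.1 p.1.rev

theorem gramTL_mulVec_eq_zero_iff (hU : U.IsSkewDiagonal) (hV : V.IsSkewDiagonal)
    (x : Fin n × Fin n → ℂ) :
    gramTL n q U V *ᵥ x = 0 ↔ ∀ p, q * x p = gramWeight q U V p * x (skewSwap p) := by
  simp only [funext_iff, Prod.forall, gramTL_mulVec_apply hU hV, Pi.zero_apply, sub_eq_zero]
  exact forall_comm

variable {z : Fin n → ℂ} (hz : ∀ i, z i = (1 + q) * U i i.rev * V i i.rev)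
include hz

theorem gramWeight_mk_rev (i : Fin n) : gramWeight q U V (i, i.rev) = z i := by
  rw [hz, gramWeight, Fin.rev_rev]

theorem gramWeight_mul_gramWeight_skewSwap (p : Fin n × Fin n) :
    gramWeight q U V p * gramWeight q U V (skewSwap p) = z p.1 * z p.2.rev := by
  simp only [hz, gramWeight, skewSwap, Fin.rev_rev]
  ring

end Gram

theorem gram_det_zero_iff_general (n : ℕ) (q : ℂ) (hq0 : q ≠ 0) (hq1 : q ≠ 1)
    (U V : Matrix (Fin n) (Fin n) ℂ)
    (hU0 : ∀ i j : Fin n, j ≠ i.rev → U i j = 0)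
    (hV0 : ∀ i j : Fin n, j ≠ i.rev → V i j = 0)
    (z : Fin n → ℂ) (hz : ∀ i : Fin n, z i = (1 + q) * U i i.rev * V i i.rev)
    (hzq : ∀ i : Fin n, z i * z i.rev = q) :
    (gramTL n q U V).det = 0 ↔
      (∃ i : Fin n, z i = q) ∨
        ∃ i j : Fin n, i ≠ j ∧ j ≠ i.rev ∧ z i.rev * z j = q ^ 2 := by
  have hq_ne_sq : q ≠ q ^ 2 := fun h =>
    hq1 (mul_left_cancel₀ hq0 (by rw [mul_one, ← sq, ← h]))
  rw [← exists_mulVec_eq_zero_iff]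
  simp_rw [gramTL_mulVec_eq_zero_iff hU0 hV0]
  rw [skewSwap_involutive.exists_ne_zero_mul_eq_mul_comp_iff hq0]
  simp only [Prod.exists, exists_or, ne_eq, skewSwap_mk_eq_self_iff,
    gramWeight_mul_gramWeight_skewSwap hz]
  refine or_congr (by simp only [exists_eq_left, gramWeight_mk_rev hz]) ⟨?_, ?_⟩
  · rintro ⟨i, j, hji, h⟩
    refine ⟨j, i, fun hij => ?_, fun hij => hji (by rw [hij, Fin.rev_rev]), by rwa [mul_comm]⟩
    subst hij
    exact hq_ne_sq (hzq j ▸ h)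
  · rintro ⟨i, j, -, hji, h⟩
    exact ⟨j, i, fun hij => hji (by rw [hij, Fin.rev_rev]), by rwa [mul_comm]⟩

/-- for `n ≥ 2`, `q ≠ 0`, `q ≠ 1`, and skew-diagonal `U`, `V` with
`z_i := (1+q)·u_i·v^i` satisfying `z_i·z_{n+1−i} = q`, the Gram matrix `G` of the
canonical pairing is degenerate (`det G = 0`) iff `z_i = q` for some `i`, or
`z_{n+1−i}·z_j = q²` for some pair `i ≠ j` with `i + j ≠ n + 1`. -/
theorem gram_det_zero_iff (n : ℕ) (hn : 2 ≤ n) (q : ℂ) (hq0 : q ≠ 0) (hq1 : q ≠ 1)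
    (U V : Matrix (Fin n) (Fin n) ℂ)
    (hU0 : ∀ i j : Fin n, j ≠ i.rev → U i j = 0)
    (hV0 : ∀ i j : Fin n, j ≠ i.rev → V i j = 0)
    (z : Fin n → ℂ) (hz : ∀ i : Fin n, z i = (1 + q) * U i i.rev * V i i.rev)
    (hzq : ∀ i : Fin n, z i * z i.rev = q) :
    (gramTL n q U V).det = 0 ↔
      (∃ i : Fin n, z i = q) ∨
        ∃ i j : Fin n, i ≠ j ∧ j ≠ i.rev ∧ z i.rev * z j = q ^ 2 :=
  gram_det_zero_iff_general n q hq0 hq1 U V hU0 hV0 z hz hzq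
end

section
/- For every n ≥ 4 there exists a finite set F ⊂ ℂ such that for every q ∈ ℂ \ F with q ≠ 0, q ≠ 1 and q ≠ −1, there exist pairwise distinct nonzero z_1, …, z_n ∈ ℂ satisfying z_i·z_{n+1−i} = q for all i and Σ_{i=1}^{n} z_i = 1+q, for which ∏_{i=1}^{n} (q − z_i)² · ∏_{(i,j) ∈ I(n)} (q² − z_{n+1−i}·z_j) ≠ 0, where I(n) := {(i,j) : 1 ≤ i, j ≤ n, i + j ≠ n+1}. (Equivalently, by the Gram determinant formula, the Gram matrix of the canonical pairing of any skew-diagonal even Hecke symmetry of TL type realizing these z_i is nondegenerate.) -/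
open Matrix


open Polynomial
noncomputable section AuxGram
namespace AuxGram

def S (n : ℕ) : ℂ[X] := ∑ k ∈ Finset.range n, X ^ k

def Qp (n : ℕ) (q : ℂ) : ℂ[X] := C ((1+q)^2) * X ^ (n-1) - C q * (S n) ^ 2

def W (n : ℕ) (N D : ℂ[X]) : ℂ[X] := (D + N) ^ 2 * X ^ (n-1) - N * D * (S n) ^ 2

def R (n : ℕ) (ξ : ℂ) : ℂ[X] :=
  C (ξ ^ (n-1)) * X ^ 2 + C (2 * ξ ^ (n-1) - ((S n).eval ξ) ^ 2) * X + C (ξ ^ (n-1))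

def Fam (n : ℕ) (N D : ℂ[X]) : Finset ℂ :=
  ((W n N D).roots.toFinset).image (fun t => N.eval t / D.eval t)

def F (n : ℕ) : Finset ℂ :=
  (((Finset.Icc 1 (n-1)).biUnion fun e => Fam n (X ^ e) 1) ∪
   ((Finset.Icc 1 (n-1)).biUnion fun e => Fam n 1 (X ^ e)) ∪
   ((Finset.range n).biUnion fun j => Fam n (X ^ j) (S n - X ^ j))) ∪
  ((Finset.Icc 1 (n-1)).biUnion fun k =>
    ((X ^ k - 1 : ℂ[X]).roots.toFinset).biUnion fun ξ => (R n ξ).roots.toFinset)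

lemma Scoeff (n m : ℕ) : (S n).coeff m = if m < n then 1 else 0 := by
  simp only [S, finset_sum_coeff, coeff_X_pow]
  simp only [eq_comm (a := m)]
  rw [Finset.sum_ite_eq' (Finset.range n) m (fun _ => (1:ℂ))]
  simp

lemma Seval (n : ℕ) (t : ℂ) : (S n).eval t = ∑ k ∈ Finset.range n, t ^ k := by
  simp [S]

lemma S_ne (n : ℕ) (hn : 1 ≤ n) : S n ≠ 0 := fun h => by
  have := Scoeff n 0
  rw [h] at this
  rw [if_pos (show 0 < n from hn)] at this
  simp at this

lemma Ssq_coeff_zero (n : ℕ) (hn : 1 ≤ n) : ((S n)^2).coeff 0 = 1 := by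
  rw [sq, mul_coeff_zero, Scoeff, if_pos (show 0 < n from hn)]
  simp

lemma Ssq_coeff_one (n : ℕ) (hn : 2 ≤ n) : ((S n)^2).coeff 1 = 2 := by
  rw [sq, coeff_mul, Finset.Nat.sum_antidiagonal_eq_sum_range_succ_mk]
  rw [Finset.sum_range_succ, Finset.sum_range_succ]
  have h0 : (0:ℕ) < n := by omega
  have h1 : (1:ℕ) < n := by omega
  simp [Scoeff, h0, h1]
  norm_num


lemma W_a_eq (n e : ℕ) : W n (X^e) 1 =
    X^(n-1) + (X^(e+(n-1)) + X^(e+(n-1))) + X^(2*e+(n-1)) - X^e * (S n)^2 := by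
  rw [W]; ring

lemma W_a_ne (n : ℕ) (hn : 3 ≤ n) (e : ℕ) (he1 : 1 ≤ e) (he2 : e ≤ n-1) :
    W n (X^e) 1 ≠ 0 := by
  intro h
  rw [W_a_eq] at h
  by_cases hc : e = n - 1
  · have hco := congrArg (fun p : ℂ[X] => p.coeff (1+e)) h
    simp only [coeff_sub, coeff_add, coeff_X_pow, coeff_X_pow_mul, coeff_zero] at hco
    rw [Ssq_coeff_one n (by omega)] at hco
    split_ifs at hco <;> first | omega | norm_num at hco
  · have hco := congrArg (fun p : ℂ[X] => p.coeff (0+e)) h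
    simp only [coeff_sub, coeff_add, coeff_X_pow, coeff_X_pow_mul, coeff_zero] at hco
    rw [Ssq_coeff_zero n (by omega)] at hco
    split_ifs at hco <;> first | omega | norm_num at hco

lemma W_c_eq (n j : ℕ) : W n (X^j) (S n - X^j) =
    (S n)^2 * (X^(n-1) + X^(2*j) - X^j * S n) := by
  rw [W]; ring

lemma W_c_ne (n : ℕ) (hn : 3 ≤ n) (j : ℕ) (hj : j < n) :
    W n (X^j) (S n - X^j) ≠ 0 := by
  rw [W_c_eq]
  refine mul_ne_zero (pow_ne_zero _ (S_ne n (by omega))) ?_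
  intro h
  by_cases hc : j = 0 ∨ j = n - 1
  · have hco := congrArg (fun p : ℂ[X] => p.coeff (1+j)) h
    simp only [coeff_sub, coeff_add, coeff_X_pow, coeff_X_pow_mul, coeff_zero, Scoeff] at hco
    split_ifs at hco <;> first | omega | norm_num at hco
  · have hco := congrArg (fun p : ℂ[X] => p.coeff (0+j)) h
    simp only [coeff_sub, coeff_add, coeff_X_pow, coeff_X_pow_mul, coeff_zero, Scoeff] at hco
    split_ifs at hco <;> first | omega | norm_num at hco

lemma R_ne (n : ℕ) (ξ : ℂ) (hξ : ξ ≠ 0) : R n ξ ≠ 0 := by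
  intro h
  have hco := congrArg (fun p : ℂ[X] => p.coeff 2) h
  simp only [R, coeff_add, coeff_C_mul, coeff_X_pow, coeff_C, coeff_X, coeff_zero] at hco
  norm_num at hco
  exact hξ hco.1

lemma R_root (n : ℕ) (ξ q : ℂ) (h : (1+q)^2 * ξ^(n-1) = q * ((S n).eval ξ)^2) :
    (R n ξ).eval q = 0 := by
  simp only [R, eval_add, eval_mul, eval_C, eval_pow, eval_X]
  linear_combination h

lemma mem_Fam (n : ℕ) (N D : ℂ[X]) (q x : ℂ) (hW : W n N D ≠ 0)
    (hQ : (1+q)^2 * x^(n-1) = q * ((S n).eval x)^2)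
    (hD : D.eval x ≠ 0) (hND : N.eval x = q * D.eval x) : q ∈ Fam n N D := by
  have hx : (W n N D).eval x = 0 := by
    simp only [W, eval_sub, eval_mul, eval_add, eval_pow, eval_X]
    rw [hND]
    linear_combination (D.eval x)^2 * hQ
  refine Finset.mem_image.2 ⟨x, Multiset.mem_toFinset.2 ((mem_roots hW).2 hx), ?_⟩
  rw [hND]
  field_simp

lemma S_natDegree (n : ℕ) (hn : 1 ≤ n) : (S n).natDegree = n - 1 := by
  have hmul : S n * (X - 1) = X^n - 1 := by
    simpa [S] using geom_sum_mul (X : ℂ[X]) n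
  have h1 : (X^n - 1 : ℂ[X]).natDegree = n := by
    simpa using natDegree_X_pow_sub_C (n := n) (r := (1:ℂ))
  have hX1 : (X - 1 : ℂ[X]) ≠ 0 := by
    simpa using X_sub_C_ne_zero (1:ℂ)
  have h2 := natDegree_mul (S_ne n hn) hX1
  rw [hmul, h1] at h2
  have h3 : (X - 1 : ℂ[X]).natDegree = 1 := by
    simpa using natDegree_X_sub_C (1:ℂ)
  omega

lemma Seval0 (n : ℕ) (hn : 1 ≤ n) : (S n).eval 0 = 1 := by
  obtain ⟨m, rfl⟩ : ∃ m, n = m + 1 := ⟨n-1, by omega⟩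
  rw [Seval, Finset.sum_range_succ']
  simp [pow_succ]

lemma Qp_root_exists (n : ℕ) (hn : 2 ≤ n) (q : ℂ) (hq : q ≠ 0) :
    ∃ x : ℂ, (Qp n q).eval x = 0 := by
  have hSn : (S n) ≠ 0 := S_ne n (by omega)
  have hbig : (C q * (S n)^2).natDegree = 2*(n-1) := by
    rw [natDegree_C_mul hq, natDegree_pow, S_natDegree n (by omega)]
  have hsmall : (C ((1+q)^2) * X^(n-1) : ℂ[X]).natDegree ≤ n - 1 := by
    refine (natDegree_C_mul_le _ _).trans ?_
    simp [natDegree_X_pow]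
  have hlt : (C ((1+q)^2) * X^(n-1) : ℂ[X]).natDegree < (C q * (S n)^2).natDegree := by
    rw [hbig]; omega
  have hdeg : (Qp n q).natDegree = 2*(n-1) := by
    rw [Qp, natDegree_sub_eq_right_of_natDegree_lt hlt, hbig]
  have hne : Qp n q ≠ 0 := by
    intro h
    rw [h, natDegree_zero] at hdeg
    omega
  have hpos : 0 < (Qp n q).degree := by
    rw [← natDegree_pos_iff_degree_pos, hdeg]
    omega
  obtain ⟨x, hx⟩ := Complex.exists_root hpos
  exact ⟨x, hx⟩

end AuxGram
end AuxGram


open Polynomial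

/-- for every `n ≥ 4` there is a finite set `F ⊂ ℂ` such that for
every `q ∉ F` with `q ≠ 0`, `q ≠ 1`, `q ≠ −1`, there exist pairwise distinct
nonzero `z_1, …, z_n` with `z_i·z_{n+1−i} = q` and `Σ z_i = 1 + q` for which
`∏_i (q − z_i)² · ∏_{(i,j) : i+j ≠ n+1} (q² − z_{n+1−i}·z_j) ≠ 0` (i.e. the Gram
matrix of the canonical pairing of any skew-diagonal even Hecke symmetry of TL
type realizing these `z_i` is nondegenerate). -/
theorem gram_nondegenerate_generic (n : ℕ) (hn : 4 ≤ n) :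
    ∃ F : Finset ℂ, ∀ q : ℂ, q ∉ F → q ≠ 0 → q ≠ 1 → q ≠ -1 →
      ∃ z : Fin n → ℂ, Function.Injective z ∧ (∀ i : Fin n, z i ≠ 0) ∧
        (∀ i : Fin n, z i * z i.rev = q) ∧ (∑ i : Fin n, z i = 1 + q) ∧
        (∏ i : Fin n, (q - z i) ^ 2) *
            (∏ p ∈ Finset.univ.filter (fun p : Fin n × Fin n => p.2 ≠ p.1.rev),
              (q ^ 2 - z p.1.rev * z p.2)) ≠ 0 := by
  classical
  refine ⟨AuxGram.F n, ?_⟩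
  intro q hqF hq0 hq1 hqm1
  have hq1' : 1 + q ≠ 0 := fun h => hqm1 (by linear_combination h)
  obtain ⟨x, hxroot⟩ := AuxGram.Qp_root_exists n (by omega) q hq0
  have hkey : (1+q)^2 * x^(n-1) = q * ((AuxGram.S n).eval x)^2 := by
    simp only [AuxGram.Qp, Polynomial.eval_sub, Polynomial.eval_mul, Polynomial.eval_C,
      Polynomial.eval_pow, Polynomial.eval_X] at hxroot
    linear_combination hxroot
  have hx0 : x ≠ 0 := by
    intro h; subst h
    rw [zero_pow (by omega : n-1 ≠ 0), AuxGram.Seval0 n (by omega)] at hkey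
    simp at hkey
    exact hq0 hkey.symm
  have hSx : (AuxGram.S n).eval x ≠ 0 := by
    intro h; rw [h] at hkey
    simp at hkey
    rcases hkey with h1 | ⟨h1, -⟩
    · exact hq1' h1
    · exact hx0 h1
  have hxk : ∀ k : ℕ, 1 ≤ k → k ≤ n-1 → x ^ k ≠ 1 := by
    intro k hk1 hk2 hxk1
    apply hqF
    have hpoly : (X^k - 1 : Polynomial ℂ) ≠ 0 := by
      simpa using Polynomial.X_pow_sub_C_ne_zero (by omega : 0 < k) (1:ℂ)
    have hxmem : x ∈ (X^k - 1 : Polynomial ℂ).roots.toFinset :=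
      Multiset.mem_toFinset.2 ((Polynomial.mem_roots hpoly).2 (by simp [Polynomial.IsRoot, hxk1]))
    have hR : q ∈ (AuxGram.R n x).roots.toFinset :=
      Multiset.mem_toFinset.2 ((Polynomial.mem_roots (AuxGram.R_ne n x hx0)).2
        (AuxGram.R_root n x q hkey))
    simp only [AuxGram.F, Finset.mem_union, Finset.mem_biUnion]
    exact Or.inr ⟨k, Finset.mem_Icc.2 ⟨hk1, hk2⟩, x, hxmem, hR⟩
  set c := (1+q) / (x * (AuxGram.S n).eval x) with hc
  have hc0 : c ≠ 0 := div_ne_zero hq1' (mul_ne_zero hx0 hSx)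
  have hc2 : c^2 * x^(n+1) = q := by
    have hxe : x^(n+1) = x^(n-1) * x^2 := by rw [← pow_add]; congr 1; omega
    rw [hc]
    field_simp
    rw [hxe]
    linear_combination x^2 * hkey
  set z : Fin n → ℂ := fun i => c * x^(i.val+1) with hz
  have hzval : ∀ i : Fin n, z i = c * x^(i.val+1) := fun i => rfl
  have hzz : ∀ i j : Fin n, z i * z j = c^2 * x^((i.val+1)+(j.val+1)) := by
    intro i j; rw [hzval, hzval, pow_add]; ring
  have hrev : ∀ i : Fin n, (i.rev.val) = n - 1 - i.val := by
    intro i; rw [Fin.val_rev]; omega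
  have keypow : ∀ a b : ℕ, 1 ≤ a → a < b → b ≤ n → x^a = x^b → False := by
    intro a b ha1 hab hbn he
    have h2 : x^a * x^(b-a) = x^a * 1 := by
      rw [mul_one, ← pow_add, show a + (b-a) = b by omega]; exact he.symm
    exact hxk (b-a) (by omega) (by omega) (mul_left_cancel₀ (pow_ne_zero a hx0) h2)
  refine ⟨z, ?_, ?_, ?_, ?_, ?_⟩
  · intro i j hij
    rw [hzval, hzval] at hij
    have hp : x^(i.val+1) = x^(j.val+1) := mul_left_cancel₀ hc0 hij
    rcases Nat.lt_trichotomy i.val j.val with h | h | h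
    · exact absurd hp (fun hp => keypow _ _ (by omega) (by omega) (by omega : j.val+1 ≤ n) hp)
    · exact Fin.ext h
    · exact absurd hp.symm (fun hp => keypow _ _ (by omega) (by omega) (by omega : i.val+1 ≤ n) hp)
  · intro i; rw [hzval]; exact mul_ne_zero hc0 (pow_ne_zero _ hx0)
  · intro i
    rw [hzz]
    rw [show (i.val+1)+(i.rev.val+1) = n+1 by rw [hrev]; have := i.isLt; omega]
    exact hc2
  · rw [show (∑ i : Fin n, z i) = ∑ k ∈ Finset.range n, c * x^(k+1) from
      Fin.sum_univ_eq_sum_range (fun k => c * x^(k+1)) n]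
    have h2 : ∑ k ∈ Finset.range n, c * x^(k+1) = c * x * ∑ k ∈ Finset.range n, x^k := by
      rw [Finset.mul_sum]; apply Finset.sum_congr rfl; intro k _; rw [pow_succ]; ring
    rw [h2, ← AuxGram.Seval, hc]
    field_simp
  · apply mul_ne_zero
    · rw [Finset.prod_ne_zero_iff]
      intro i _
      apply pow_ne_zero
      intro hqz
      have hzi : q = c * x^(i.val+1) := by rw [← hzval]; linear_combination hqz
      apply hqF
      have hqx : q * (x * (AuxGram.S n).eval x) = (1+q) * x^(i.val+1) := by
        rw [hc, div_mul_eq_mul_div, eq_div_iff (mul_ne_zero hx0 hSx)] at hzi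
        linear_combination hzi
      have hqx2 : q * ((AuxGram.S n).eval x) = (1+q) * x^(i.val) := by
        have h2 : x * (q * ((AuxGram.S n).eval x)) = x * ((1+q) * x^(i.val)) := by
          rw [pow_succ] at hqx; linear_combination hqx
        exact mul_left_cancel₀ hx0 h2
      have hD : (AuxGram.S n - X^(i.val) : Polynomial ℂ).eval x ≠ 0 := by
        simp only [Polynomial.eval_sub, Polynomial.eval_pow, Polynomial.eval_X]
        intro h
        rw [sub_eq_zero] at h
        rw [h] at hqx2
        exact pow_ne_zero i.val hx0 (by linear_combination -hqx2)
      have hND : (X^(i.val) : Polynomial ℂ).eval x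
          = q * ((AuxGram.S n - X^(i.val) : Polynomial ℂ)).eval x := by
        simp only [Polynomial.eval_sub, Polynomial.eval_pow, Polynomial.eval_X]
        linear_combination -hqx2
      have hmem := AuxGram.mem_Fam n (X^(i.val)) (AuxGram.S n - X^(i.val)) q x
        (AuxGram.W_c_ne n (by omega) i.val i.isLt) hkey hD hND
      simp only [AuxGram.F, Finset.mem_union, Finset.mem_biUnion]
      exact Or.inl (Or.inr ⟨i.val, Finset.mem_range.2 i.isLt, hmem⟩)
    · rw [Finset.prod_ne_zero_iff]
      intro p hp
      have ha := p.1.isLt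
      have hb := p.2.isLt
      have hE : z p.1.rev * z p.2 = c^2 * x^((n-1-p.1.val+1)+(p.2.val+1)) := by
        rw [hzz, hrev]
      rcases Nat.lt_trichotomy p.1.val p.2.val with h | h | h
      · have he2 : (n-1-p.1.val+1)+(p.2.val+1) = (n+1) + (p.2.val - p.1.val) := by omega
        rw [hE, he2, pow_add, ← mul_assoc, hc2]
        intro hzero
        have hqe : q = x^(p.2.val - p.1.val) := by
          have h2 : q * q = q * x^(p.2.val - p.1.val) := by linear_combination hzero
          exact mul_left_cancel₀ hq0 h2
        apply hqF
        have hmem := AuxGram.mem_Fam n (X^(p.2.val - p.1.val)) 1 q x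
          (AuxGram.W_a_ne n (by omega) _ (by omega) (by omega)) hkey (by simp)
          (by simp only [Polynomial.eval_pow, Polynomial.eval_X, Polynomial.eval_one, mul_one]
              exact hqe.symm)
        simp only [AuxGram.F, Finset.mem_union, Finset.mem_biUnion]
        exact Or.inl (Or.inl (Or.inl ⟨p.2.val - p.1.val,
          Finset.mem_Icc.2 ⟨by omega, by omega⟩, hmem⟩))
      · have he2 : (n-1-p.1.val+1)+(p.2.val+1) = n+1 := by omega
        rw [hE, he2, hc2]
        intro hzero
        have h3 : q * (q - 1) = 0 := by linear_combination hzero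
        rcases mul_eq_zero.1 h3 with h4 | h4
        · exact hq0 h4
        · exact hq1 (by linear_combination h4)
      · rw [hE]
        intro hzero
        have he2 : ((n-1-p.1.val+1)+(p.2.val+1)) + (p.1.val - p.2.val) = n+1 := by omega
        have h4 : q^2 * x^(p.1.val - p.2.val)
            = c^2 * x^(((n-1-p.1.val+1)+(p.2.val+1)) + (p.1.val - p.2.val)) := by
          rw [pow_add]; linear_combination x^(p.1.val - p.2.val) * hzero
        rw [he2, hc2] at h4
        have h5 : q * x^(p.1.val - p.2.val) = 1 := by
          have h6 : q * (q * x^(p.1.val - p.2.val)) = q * 1 := by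
            rw [mul_one]; linear_combination h4
          exact mul_left_cancel₀ hq0 h6
        apply hqF
        have hWb : AuxGram.W n 1 (X^(p.1.val - p.2.val)) =
            AuxGram.W n (X^(p.1.val - p.2.val)) 1 := by
          rw [AuxGram.W, AuxGram.W]; ring
        have hmem := AuxGram.mem_Fam n 1 (X^(p.1.val - p.2.val)) q x
          (by rw [hWb]; exact AuxGram.W_a_ne n (by omega) _ (by omega) (by omega))
          hkey (by simp [pow_ne_zero, hx0])
          (by simp only [Polynomial.eval_pow, Polynomial.eval_X, Polynomial.eval_one]
              exact h5.symm)
        simp only [AuxGram.F, Finset.mem_union, Finset.mem_biUnion]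
        exact Or.inl (Or.inl (Or.inr ⟨p.1.val - p.2.val,
          Finset.mem_Icc.2 ⟨by omega, by omega⟩, hmem⟩))
end

section
/- For n = 3 there exists a finite set F ⊂ ℂ such that for every q ∈ ℂ \ F with q ≠ 0, q ≠ 1 and q ≠ −1, every triple (z_1, z_2, z_3) of complex numbers with z_2² = q, z_1·z_3 = q and z_1 + z_2 + z_3 = 1 + q satisfies (q − z_1)²·(q − z_2)²·(q − z_3)² · ∏_{(i,j), i+j≠4} (q² − z_{4−i}·z_j) ≠ 0, where (i,j) ranges over pairs with 1 ≤ i, j ≤ 3 and i + j ≠ 4. (Equivalently, by the Gram determinant formula, for generic q all four solutions of the system give a nondegenerate Gram matrix of the canonical pairing.) -/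
/-!
On the curve `z₂² = q`, `z₁ z₃ = q`, `z₁ + z₂ + z₃ = 1 + q` one has `(q - z₁)(q - z₃) = q z₂`,
`(q - z₂)(q + z₂) = q² - z₁ z₃ = q (q - 1)` and
`(q² - z₁ z₂)(q² - z₂ z₃) = q² (q² + q + 1 - (1 + q) z₂)`. Multiplying the last factor by its
conjugate under `z₂ ↦ -z₂` gives `q⁴ + q³ + q² + q + 1`, so for `q ≠ 0, 1` no factor vanishes
unless `q` is a primitive fifth root of unity; these form the exceptional set `F`.
-/

open Polynomial

theorem geom_sum_five_ne_zero_of_notMem_primitiveRoots {R : Type*} [CommRing R] [IsDomain R]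
    [CharZero R] {q : R} (hq : q ∉ primitiveRoots 5 R) : q ^ 4 + q ^ 3 + q ^ 2 + q + 1 ≠ 0 := by
  have : Fact (Nat.Prime 5) := ⟨Nat.prime_five⟩
  contrapose! hq
  rw [mem_primitiveRoots (by norm_num), ← isRoot_cyclotomic_iff_charZero (by norm_num),
    cyclotomic_prime, IsRoot, eval_geom_sum]
  simp only [Finset.sum_range_succ, Finset.sum_range_zero]
  linear_combination hq

namespace GramThree

variable {R : Type*} [CommRing R] {q z₁ z₂ z₃ : R}

theorem sq_add_add_one_sub_mul_ne_zero (h₂ : z₂ ^ 2 = q)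
    (hΦ : q ^ 4 + q ^ 3 + q ^ 2 + q + 1 ≠ 0) : q ^ 2 + q + 1 - (1 + q) * z₂ ≠ 0 := by
  have h : (q ^ 2 + q + 1 - (1 + q) * z₂) * (q ^ 2 + q + 1 + (1 + q) * z₂) =
      q ^ 4 + q ^ 3 + q ^ 2 + q + 1 := by
    linear_combination -(1 + q) ^ 2 * h₂
  exact left_ne_zero_of_mul (h ▸ hΦ)

variable [NoZeroDivisors R]

theorem sub_ne_zero_of_sq_eq (hq₀ : q ≠ 0) (hq₁ : q ≠ 1) (h₂ : z₂ ^ 2 = q) : q - z₂ ≠ 0 := by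
  have h : (q - z₂) * (q + z₂) = q * (q - 1) := by linear_combination -h₂
  exact left_ne_zero_of_mul (h ▸ mul_ne_zero hq₀ (sub_ne_zero.2 hq₁))

theorem sub_mul_sub_ne_zero (hq₀ : q ≠ 0) (h₂ : z₂ ^ 2 = q) (h₁₃ : z₁ * z₃ = q)
    (hsum : z₁ + z₂ + z₃ = 1 + q) : (q - z₁) * (q - z₃) ≠ 0 := by
  have hz₂ : z₂ ≠ 0 := by rintro rfl; exact hq₀ (by simpa using h₂.symm)
  have h : (q - z₁) * (q - z₃) = q * z₂ := by linear_combination -q * hsum + h₁₃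
  exact h ▸ mul_ne_zero hq₀ hz₂

theorem sq_sub_mul_ne_zero_of_mul_eq (hq₀ : q ≠ 0) (hq₁ : q ≠ 1) (h₁₃ : z₁ * z₃ = q) :
    q ^ 2 - z₁ * z₃ ≠ 0 := by
  have h : q ^ 2 - z₁ * z₃ = q * (q - 1) := by linear_combination -h₁₃
  exact h ▸ mul_ne_zero hq₀ (sub_ne_zero.2 hq₁)

theorem sq_sub_mul_mul_sq_sub_mul_ne_zero (hq₀ : q ≠ 0) (h₂ : z₂ ^ 2 = q) (h₁₃ : z₁ * z₃ = q)
    (hsum : z₁ + z₂ + z₃ = 1 + q) (hΦ : q ^ 4 + q ^ 3 + q ^ 2 + q + 1 ≠ 0) :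
    (q ^ 2 - z₁ * z₂) * (q ^ 2 - z₂ * z₃) ≠ 0 := by
  have h : (q ^ 2 - z₁ * z₂) * (q ^ 2 - z₂ * z₃) = q ^ 2 * (q ^ 2 + q + 1 - (1 + q) * z₂) := by
    linear_combination -q ^ 2 * z₂ * hsum + (q ^ 2 + z₁ * z₃) * h₂ + q * h₁₃
  exact h ▸ mul_ne_zero (pow_ne_zero 2 hq₀) (sq_add_add_one_sub_mul_ne_zero h₂ hΦ)

theorem sq_sub_vecCons_mul_ne_zero (hq₀ : q ≠ 0) (hq₁ : q ≠ 1) (h₂ : z₂ ^ 2 = q)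
    (h₁₃ : z₁ * z₃ = q) (hsum : z₁ + z₂ + z₃ = 1 + q) (hΦ : q ^ 4 + q ^ 3 + q ^ 2 + q + 1 ≠ 0)
    {a b : Fin 3} (hab : a ≠ b) : q ^ 2 - ![z₁, z₂, z₃] a * ![z₁, z₂, z₃] b ≠ 0 := by
  have h₁₃' := sq_sub_mul_ne_zero_of_mul_eq hq₀ hq₁ h₁₃
  have h₁₂₂₃ := sq_sub_mul_mul_sq_sub_mul_ne_zero hq₀ h₂ h₁₃ hsum hΦ
  have h₁₂ := left_ne_zero_of_mul h₁₂₂₃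
  have h₂₃ := right_ne_zero_of_mul h₁₂₂₃
  fin_cases a <;> fin_cases b <;> simp_all [mul_comm]

end GramThree

open GramThree in
/-- for `n = 3` there is a finite set `F ⊂ ℂ` such that for every
`q ∉ F` with `q ≠ 0`, `q ≠ 1`, `q ≠ −1`, every triple `(z₁, z₂, z₃)` with
`z₂² = q`, `z₁·z₃ = q`, `z₁ + z₂ + z₃ = 1 + q` satisfies
`(q − z₁)²·(q − z₂)²·(q − z₃)² · ∏_{(i,j) : i+j ≠ 4} (q² − z_{4−i}·z_j) ≠ 0`,
i.e. for generic `q` all four solutions of the system give a nondegenerate Gram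
matrix of the canonical pairing. -/
theorem gram_nondegenerate_n3 :
    ∃ F : Finset ℂ, ∀ q : ℂ, q ∉ F → q ≠ 0 → q ≠ 1 → q ≠ -1 →
      ∀ z₁ z₂ z₃ : ℂ, z₂ ^ 2 = q → z₁ * z₃ = q → z₁ + z₂ + z₃ = 1 + q →
        (q - z₁) ^ 2 * (q - z₂) ^ 2 * (q - z₃) ^ 2 *
            (∏ p ∈ Finset.univ.filter (fun p : Fin 3 × Fin 3 => p.2 ≠ p.1.rev),
              (q ^ 2 - ![z₁, z₂, z₃] p.1.rev * ![z₁, z₂, z₃] p.2)) ≠ 0 := by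
  refine ⟨primitiveRoots 5 ℂ, fun q hqF hq₀ hq₁ _ z₁ z₂ z₃ h₂ h₁₃ hsum => ?_⟩
  have hΦ := geom_sum_five_ne_zero_of_notMem_primitiveRoots hqF
  have hq₁₃ := sub_mul_sub_ne_zero hq₀ h₂ h₁₃ hsum
  refine mul_ne_zero (mul_ne_zero (mul_ne_zero ?_ ?_) ?_) (Finset.prod_ne_zero_iff.2 ?_)
  · exact pow_ne_zero 2 (left_ne_zero_of_mul hq₁₃)
  · exact pow_ne_zero 2 (sub_ne_zero_of_sq_eq hq₀ hq₁ h₂)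
  · exact pow_ne_zero 2 (right_ne_zero_of_mul hq₁₃)
  · intro p hp
    exact sq_sub_vecCons_mul_ne_zero hq₀ hq₁ h₂ h₁₃ hsum hΦ (Finset.mem_filter.1 hp).2.symm
end
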